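/- arXiv:2504.16528 — 5 statements merged into one kernel-verified Lean document; each statement's English description precedes it below -/
import Mathlib

section
/- Let G be a game graph with weight function w. The edge-optimal value function optE is a fixed point of the edge operator O_E, i.e., O_E(optE)(e) = optE(e) for every edge e ∈ E. -/
open scoped Classical

noncomputable section

namespace QaSTelPaper

variable {V : Type*}

/-- Prefix weight `w(ρ[0;i])` of a play. -/
def prefW (w : V × V → ℤ) (ρ : ℕ → V) (i : ℕ) : ℤ :=
  ∑ j ∈ Finset.range i, w (ρ j, ρ (j + 1))

/-- A play on the edge set `E`. -/
def IsPlay (E : Set (V × V)) (ρ : ℕ → V) : Prop :=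
  ∀ i, (ρ i, ρ (i + 1)) ∈ E

/-- A Player-0 strategy assigns to each history and current Player-0 node a successor
that forms an edge. -/
def IsStrategy (V0 : Set V) (E : Set (V × V)) (π : List V → V → V) : Prop :=
  ∀ H v, v ∈ V0 → (v, π H v) ∈ E

/-- History of the play `ρ` strictly before index `i`. -/
def hist (ρ : ℕ → V) (i : ℕ) : List V :=
  List.ofFn fun j : Fin i => ρ j.1

/-- `ρ` is a `π`-play. -/
def FollowsStrat (V0 : Set V) (π : List V → V → V) (ρ : ℕ → V) : Prop :=
  ∀ i, ρ i ∈ V0 → ρ (i + 1) = π (hist ρ i) (ρ i)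

/-- The energy objective `En_c(w)`. -/
def En (w : V × V → ℤ) (c : ℕ) : Set (ℕ → V) :=
  {ρ | ∀ i, 0 ≤ (c : ℤ) + prefW w ρ i}

/-- The mean-payoff objective `MP(w)`. -/
def MP (w : V × V → ℤ) : Set (ℕ → V) :=
  {ρ | 0 ≤ Filter.limsup (fun n : ℕ => ((prefW w ρ n : ℝ) / (n : ℝ) : EReal)) Filter.atTop}

/-- `π` is winning from `v` for objective `φ`. -/
def WinningFrom (V0 : Set V) (E : Set (V × V)) (π : List V → V → V)
    (φ : Set (ℕ → V)) (v : V) : Prop :=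
  ∀ ρ, IsPlay E ρ → FollowsStrat V0 π ρ → ρ 0 = v → ρ ∈ φ

/-- The winning region of Player 0 for objective `φ`. -/
def Win (V0 : Set V) (E : Set (V × V)) (φ : Set (ℕ → V)) : Set V :=
  {v | ∃ π, IsStrategy V0 E π ∧ WinningFrom V0 E π φ v}

/-- A quantitative strategy template (QaSTel): monotone assignment of sets of activated
outgoing edges. -/
def IsQaSTel (E : Set (V × V)) (Temp : V → ℕ∞ → Set (V × V)) : Prop :=
  (∀ u c e, e ∈ Temp u c → e ∈ E ∧ e.1 = u) ∧
  ∀ u c c', c ≤ c' → Temp u c ⊆ Temp u c'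

/-- Activation value `act_Π(e)`: the least `k` such that `e ∈ Π(e.1, c)` for all `c ≥ k`. -/
def act (Temp : V → ℕ∞ → Set (V × V)) (e : V × V) : ℕ∞ :=
  sInf {k : ℕ∞ | ∀ c, k ≤ c → e ∈ Temp e.1 c}

/-- A QaSTel extended to integer credits: empty for negative credits. -/
def tmplZ (Temp : V → ℕ∞ → Set (V × V)) (u : V) (z : ℤ) : Set (V × V) :=
  if 0 ≤ z then Temp u (z.toNat : ℕ∞) else ∅

/-- `ρ` is a `(Π, c)`-play. -/
def TemplatePlay (V0 : Set V) (w : V × V → ℤ) (Temp : V → ℕ∞ → Set (V × V))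
    (c : ℕ) (ρ : ℕ → V) : Prop :=
  (∀ i, ρ i ∈ V0 → (ρ i, ρ (i + 1)) ∈ tmplZ Temp (ρ i) ((c : ℤ) + prefW w ρ i)) ∨
  ∃ k : ℕ,
    (∀ i ≤ k, ρ i ∈ V0 → (ρ i, ρ (i + 1)) ∈ tmplZ Temp (ρ i) ((c : ℤ) + prefW w ρ i)) ∧
    ρ (k + 1) ∈ V0 ∧ tmplZ Temp (ρ (k + 1)) ((c : ℤ) + prefW w ρ (k + 1)) = ∅

/-- `π ⊨_c Π`: every `π`-play is a `(Π, c)`-play. -/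
def FollowsTemplate (V0 : Set V) (E : Set (V × V)) (w : V × V → ℤ)
    (π : List V → V → V) (Temp : V → ℕ∞ → Set (V × V)) (c : ℕ) : Prop :=
  ∀ ρ, IsPlay E ρ → FollowsStrat V0 π ρ → TemplatePlay V0 w Temp c ρ

/-- Shift a play by one step. -/
def shift (ρ : ℕ → V) : ℕ → V := fun i => ρ (i + 1)

/-- The edge-optimal value `optE(e)`: the least `m` such that for every initial credit
`c ≥ m` there is a Player-0 strategy `π` with `plays_π(G,e) ⊆ En_c(w)`. -/
def optE (V0 : Set V) (E : Set (V × V)) (w : V × V → ℤ) (e : V × V) : ℕ∞ :=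
  sInf {m : ℕ∞ | ∀ c : ℕ, m ≤ (c : ℕ∞) →
    ∃ π, IsStrategy V0 E π ∧
      ∀ ρ, IsPlay E ρ → (ρ 0, ρ 1) = e → FollowsStrat V0 π (shift ρ) → ρ ∈ En w c}

/-- The node-optimal value `opt(v)`. -/
def optV (V0 : Set V) (E : Set (V × V)) (w : V × V → ℤ) (v : V) : ℕ∞ :=
  sInf {m : ℕ∞ | ∀ c : ℕ, m ≤ (c : ℕ∞) →
    ∃ π, IsStrategy V0 E π ∧ WinningFrom V0 E π (En w c) v}

/-- Truncated subtraction `l ⊖ a` of an integer from an extended natural. -/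
def osub (l : ℕ∞) (a : ℤ) : ℕ∞ :=
  if l = ⊤ then ⊤ else (((l.toNat : ℤ) - a).toNat : ℕ∞)

/-- The edge-based value-iteration operator `O_E`. -/
def OE (V0 : Set V) (E : Set (V × V)) (w : V × V → ℤ)
    (μ : V × V → ℕ∞) (e : V × V) : ℕ∞ :=
  if e.2 ∈ V0 then
    sInf {x : ℕ∞ | ∃ e' ∈ E, e'.1 = e.2 ∧ x = osub (μ e') (w e)}
  else
    sSup {x : ℕ∞ | ∃ e' ∈ E, e'.1 = e.2 ∧ x = osub (μ e') (w e)}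

/-- The optimal QaSTel `Temp(u,k) = {e ∈ E(u) : optE(e) ≤ k}`. -/
def optTmpl (V0 : Set V) (E : Set (V × V)) (w : V × V → ℤ) :
    V → ℕ∞ → Set (V × V) :=
  fun u k => {e | e ∈ E ∧ e.1 = u ∧ optE V0 E w e ≤ k}

/-- Canonical extension of the memory-update function to histories. -/
def updMem {M : Type*} (α : M × V → M) (m0 : M) (H : List V) : M :=
  H.foldl (fun m v => α (m, v)) m0

/-- The strategy induced by a finite-memory machine `(M, m0, α, β)`. -/
def memStrat {M : Type*} (α : M × V → M) (β : M × V → V) (m0 : M) :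
    List V → V → V :=
  fun H v => β (updMem α m0 H, v)

end QaSTelPaper

namespace S2
open QaSTelPaper

variable {V : Type*} {V0 : Set V} {E : Set (V × V)} {w : V × V → ℤ}

/-- Initial credit `c` suffices for edge `e`. -/
def Pe (V0 : Set V) (E : Set (V × V)) (w : V × V → ℤ) (e : V × V) (c : ℕ) : Prop :=
  ∃ π, IsStrategy V0 E π ∧
    ∀ ρ, IsPlay E ρ → (ρ 0, ρ 1) = e → FollowsStrat V0 π (shift ρ) → ρ ∈ En w c

lemma optE_eq (e : V × V) :
    optE V0 E w e = sInf {m : ℕ∞ | ∀ c : ℕ, m ≤ (c : ℕ∞) → Pe V0 E w e c} := rfl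

lemma hist_zero (σ : ℕ → V) : hist σ 0 = [] := by simp [hist]

lemma hist_succ (σ : ℕ → V) (n : ℕ) : hist σ (n + 1) = σ 0 :: hist (shift σ) n := by
  simp [hist, List.ofFn_succ, shift]

lemma hist_concat (σ : ℕ → V) (n : ℕ) : hist σ (n + 1) = hist σ n ++ [σ n] := by
  induction n generalizing σ with
  | zero => simp [hist_succ, hist_zero]
  | succ n ih =>
      rw [hist_succ, ih, hist_succ]
      simp [shift]

lemma prefW_shift (ρ : ℕ → V) (i : ℕ) :
    prefW w ρ (i + 1) = w (ρ 0, ρ 1) + prefW w (shift ρ) i := by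
  simp only [prefW, Finset.sum_range_succ', shift]
  ring

lemma Pe_mono {e : V × V} {c c' : ℕ} (hcc : c ≤ c') (h : Pe V0 E w e c) :
    Pe V0 E w e c' := by
  obtain ⟨π, hπ, hg⟩ := h
  refine ⟨π, hπ, fun ρ h1 h2 h3 => ?_⟩
  intro i
  have h4 := hg ρ h1 h2 h3 i
  have : (c : ℤ) ≤ (c' : ℤ) := by exact_mod_cast hcc
  linarith

lemma optE_le_iff {e : V × V} {c : ℕ} :
    optE V0 E w e ≤ (c : ℕ∞) ↔ Pe V0 E w e c := by
  rw [optE_eq]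
  constructor
  · intro h
    have hlt : sInf {m : ℕ∞ | ∀ c : ℕ, m ≤ (c : ℕ∞) → Pe V0 E w e c}
        < ((c + 1 : ℕ) : ℕ∞) := by
      refine lt_of_le_of_lt h ?_
      exact_mod_cast Nat.lt_succ_self c
    obtain ⟨m, hm, hmlt⟩ := sInf_lt_iff.mp hlt
    have hm_ne : m ≠ ⊤ := hmlt.ne_top
    obtain ⟨n, rfl⟩ : ∃ n : ℕ, m = (n : ℕ∞) := ⟨m.toNat, (ENat.coe_toNat hm_ne).symm⟩
    have hn : n ≤ c := by
      have : n < c + 1 := by exact_mod_cast hmlt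
      omega
    exact hm c (by exact_mod_cast hn)
  · intro h
    refine sInf_le ?_
    intro c' hc'
    exact Pe_mono (by exact_mod_cast hc') h

lemma osub_le_iff {l : ℕ∞} {a : ℤ} {c : ℕ} :
    osub l a ≤ (c : ℕ∞) ↔ ∃ n : ℕ, l = (n : ℕ∞) ∧ (n : ℤ) ≤ (c : ℤ) + a := by
  unfold osub
  split
  · subst ‹l = ⊤›
    simp
  · rename_i hl
    obtain ⟨n, rfl⟩ : ∃ n : ℕ, l = (n : ℕ∞) := ⟨l.toNat, (ENat.coe_toNat hl).symm⟩
    rw [Nat.cast_le]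
    constructor
    · intro h
      refine ⟨n, rfl, ?_⟩
      have : ((n : ℕ∞).toNat : ℤ) - a ≤ (c : ℤ) := by
        have := Int.toNat_le.mp h
        exact this
      simp at this ⊢
      omega
    · rintro ⟨n', hn', h⟩
      have hnn : n = n' := by exact_mod_cast hn'
      subst hnn
      rw [Int.toNat_le]
      simp
      omega

section Ext
variable (V0 E)

noncomputable def extP (hE : ∀ v : V, ∃ v', (v, v') ∈ E) (π : List V → V → V) (v : V) :
    ℕ → List V × V
  | 0 => ([], v)
  | n + 1 =>
      ((extP hE π v n).1 ++ [(extP hE π v n).2],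
        if (extP hE π v n).2 ∈ V0 then π (extP hE π v n).1 (extP hE π v n).2
        else Classical.choose (hE (extP hE π v n).2))

lemma extP_fst (hE : ∀ v : V, ∃ v', (v, v') ∈ E) (π : List V → V → V) (v : V) (n : ℕ) :
    (extP V0 E hE π v n).1 = hist (fun k => (extP V0 E hE π v k).2) n := by
  induction n with
  | zero => simp [extP, hist_zero]
  | succ n ih => rw [hist_concat]; simp only [extP]; rw [ih]

end Ext

lemma exists_play (hE : ∀ v : V, ∃ v', (v, v') ∈ E) {π : List V → V → V}
    (hπ : IsStrategy V0 E π) (u v : V) (huv : (u, v) ∈ E) :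
    ∃ ρ : ℕ → V, IsPlay E ρ ∧ ρ 0 = u ∧ ρ 1 = v ∧ FollowsStrat V0 π (shift ρ) := by
  set σ : ℕ → V := fun k => (extP V0 E hE π v k).2 with hσ
  have hstep : ∀ n, σ (n + 1) =
      if σ n ∈ V0 then π (hist σ n) (σ n) else Classical.choose (hE (σ n)) := by
    intro n
    show (extP V0 E hE π v (n + 1)).2 = _
    rw [show (extP V0 E hE π v (n + 1)).2 =
      (if (extP V0 E hE π v n).2 ∈ V0 then π (extP V0 E hE π v n).1 (extP V0 E hE π v n).2
        else Classical.choose (hE (extP V0 E hE π v n).2)) from rfl]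
    rw [extP_fst V0 E hE π v n]
  have hedge : ∀ n, (σ n, σ (n + 1)) ∈ E := by
    intro n
    rw [hstep n]
    split
    · exact hπ _ _ ‹_›
    · exact Classical.choose_spec (hE (σ n))
  refine ⟨fun n => Nat.casesOn n u σ, ?_, rfl, rfl, ?_⟩
  · intro i
    cases i with
    | zero => exact huv
    | succ i => exact hedge i
  · intro i hi
    have hi' : σ i ∈ V0 := hi
    show σ (i + 1) = π (hist σ i) (σ i)
    rw [hstep i, if_pos hi']

lemma en_of_shift {ρ : ℕ → V} {e : V × V} {c : ℕ} (hc : 0 ≤ (c : ℤ) + w e)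
    (hfirst : (ρ 0, ρ 1) = e)
    (hσ : shift ρ ∈ En w ((c : ℤ) + w e).toNat) : ρ ∈ En w c := by
  simp only [En, Set.mem_setOf_eq] at hσ ⊢
  intro i
  cases i with
  | zero => simp [prefW]
  | succ i =>
      have h1 := hσ i
      have h2 : prefW w ρ (i + 1) = w e + prefW w (shift ρ) i := by
        rw [prefW_shift, hfirst]
      have h3 : ((((c : ℤ) + w e).toNat : ℕ) : ℤ) = (c : ℤ) + w e := Int.toNat_of_nonneg hc
      rw [h2]
      linarith [h3 ▸ h1]

lemma en_shift_of {ρ : ℕ → V} {e : V × V} {c : ℕ} (hc : 0 ≤ (c : ℤ) + w e)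
    (hfirst : (ρ 0, ρ 1) = e)
    (h : ρ ∈ En w c) : shift ρ ∈ En w ((c : ℤ) + w e).toNat := by
  simp only [En, Set.mem_setOf_eq] at h ⊢
  intro i
  have h1 := h (i + 1)
  have h2 : prefW w ρ (i + 1) = w e + prefW w (shift ρ) i := by
    rw [prefW_shift, hfirst]
  have h3 : ((((c : ℤ) + w e).toNat : ℕ) : ℤ) = (c : ℤ) + w e := Int.toNat_of_nonneg hc
  rw [h2] at h1
  linarith

/-- Forward direction, part 1: the initial credit survives the first edge. -/
lemma forward_init (hE : ∀ v : V, ∃ v', (v, v') ∈ E) {e : V × V} (he : e ∈ E) {c : ℕ}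
    (h : Pe V0 E w e c) : 0 ≤ (c : ℤ) + w e := by
  obtain ⟨π, hπ, hg⟩ := h
  obtain ⟨ρ, hplay, h0, h1, hfol⟩ := exists_play hE hπ e.1 e.2 (by simpa using he)
  have hmem := hg ρ hplay (by rw [h0, h1]) hfol
  have h2 := hmem 1
  have hp : prefW w ρ 1 = w e := by
    simp [prefW, h0, h1]
  rw [hp] at h2
  exact h2

/-- Forward direction, part 2. -/
lemma forward_succ {e : V × V} (he : e ∈ E) {c : ℕ} {π : List V → V → V}
    (hπ : IsStrategy V0 E π)
    (hg : ∀ ρ, IsPlay E ρ → (ρ 0, ρ 1) = e → FollowsStrat V0 π (shift ρ) → ρ ∈ En w c)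
    (hc : 0 ≤ (c : ℤ) + w e) (e' : V × V) (he1 : e'.1 = e.2)
    (h0 : e.2 ∈ V0 → e'.2 = π ([] : List V) e.2) :
    Pe V0 E w e' ((c : ℤ) + w e).toNat := by
  refine ⟨fun H x => π (e.2 :: H) x, fun H x hx => hπ _ _ hx, ?_⟩
  intro σ hσplay hσfirst hσfol
  have hσ0 : σ 0 = e.2 := by
    have := congrArg Prod.fst hσfirst; simpa [he1] using this
  have hσ1 : σ 1 = e'.2 := congrArg Prod.snd hσfirst
  set ρ : ℕ → V := fun n => Nat.casesOn n e.1 σ with hρdef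
  have hρplay : IsPlay E ρ := by
    intro i
    cases i with
    | zero =>
        show (e.1, σ 0) ∈ E
        rw [hσ0]
        simpa using he
    | succ i => exact hσplay i
  have hρfirst : (ρ 0, ρ 1) = e := by
    show (e.1, σ 0) = e
    rw [hσ0]
  have hρfol : FollowsStrat V0 π (shift ρ) := by
    intro i hi
    cases i with
    | zero =>
        show σ 1 = π (hist σ 0) (σ 0)
        have hi' : σ 0 ∈ V0 := hi
        rw [hist_zero, hσ0, hσ1]
        exact h0 (hσ0 ▸ hi')
    | succ i =>
        show σ (i + 2) = π (hist σ (i + 1)) (σ (i + 1))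
        have := hσfol i hi
        rw [hist_succ, hσ0]
        exact this
  have hmem := hg ρ hρplay hρfirst hρfol
  exact en_shift_of hc hρfirst hmem

/-- Backward direction for Player-0 target nodes. -/
lemma backward_V0 (hE : ∀ v : V, ∃ v', (v, v') ∈ E) {e e' : V × V} (hv : e.2 ∈ V0)
    (he' : e' ∈ E) (he1 : e'.1 = e.2) {c : ℕ} (hc : 0 ≤ (c : ℤ) + w e)
    (h : Pe V0 E w e' ((c : ℤ) + w e).toNat) : Pe V0 E w e c := by
  obtain ⟨π', hπ', hg'⟩ := h
  set π : List V → V → V := fun H x =>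
    if H = [] then (if x = e.2 then e'.2 else Classical.choose (hE x))
    else π' H.tail x with hπdef
  have hstr : IsStrategy V0 E π := by
    intro H x hx
    by_cases hH : H = []
    · by_cases hx2 : x = e.2
      · have : (x, π H x) = e' := by
          simp only [hπdef, if_pos hH, if_pos hx2]
          rw [hx2, ← he1]
        rw [this]; exact he'
      · simp only [hπdef, if_pos hH, if_neg hx2]
        exact Classical.choose_spec (hE x)
    · simp only [hπdef, if_neg hH]
      exact hπ' _ _ hx
  refine ⟨π, hstr, ?_⟩
  intro ρ hplay hfirst hfol
  have hρ1 : ρ 1 = e.2 := congrArg Prod.snd hfirst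
  have hρ2 : ρ 2 = e'.2 := by
    have h1 := hfol 0 (by show ρ 1 ∈ V0; rw [hρ1]; exact hv)
    have h2 : hist (shift ρ) 0 = [] := hist_zero _
    rw [h2] at h1
    simp only [hπdef, if_pos rfl] at h1
    simpa [shift, hρ1] using h1
  have hσfol : FollowsStrat V0 π' (shift (shift ρ)) := by
    intro j hj
    have h1 := hfol (j + 1) hj
    rw [hist_succ] at h1
    simp only [hπdef] at h1
    rw [if_neg (by simp)] at h1
    exact h1
  have hσmem : shift ρ ∈ En w ((c : ℤ) + w e).toNat := by
    refine hg' (shift ρ) (fun i => hplay (i + 1)) ?_ hσfol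
    show (ρ 1, ρ 2) = e'
    rw [hρ1, hρ2, ← he1]
  exact en_of_shift hc hfirst hσmem

/-- Backward direction when all succcessor edges admit the credit. -/
lemma backward_all (hE : ∀ v : V, ∃ v', (v, v') ∈ E) {e : V × V} {c : ℕ}
    (hc : 0 ≤ (c : ℤ) + w e)
    (h : ∀ e' ∈ E, e'.1 = e.2 → Pe V0 E w e' ((c : ℤ) + w e).toNat) : Pe V0 E w e c := by
  have hch : ∀ x : V, ∃ π', IsStrategy V0 E π' ∧ ((e.2, x) ∈ E →
      ∀ ρ, IsPlay E ρ → (ρ 0, ρ 1) = (e.2, x) → FollowsStrat V0 π' (shift ρ) →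
        ρ ∈ En w ((c : ℤ) + w e).toNat) := by
    intro x
    by_cases hx : (e.2, x) ∈ E
    · obtain ⟨π', h1, h2⟩ := h (e.2, x) hx rfl
      exact ⟨π', h1, fun _ => h2⟩
    · exact ⟨fun H y => Classical.choose (hE y),
        fun H y hy => Classical.choose_spec (hE y), fun hx' => absurd hx' hx⟩
  choose πs hs1 hs2 using hch
  set π : List V → V → V := fun H x =>
    if H = [] then Classical.choose (hE x) else πs (H.tail.headD x) H.tail x with hπdef
  have hstr : IsStrategy V0 E π := by
    intro H x hx
    by_cases hH : H = []
    · simp only [hπdef, if_pos hH]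
      exact Classical.choose_spec (hE x)
    · simp only [hπdef, if_neg hH]
      exact hs1 _ _ _ hx
  refine ⟨π, hstr, ?_⟩
  intro ρ hplay hfirst hfol
  have hρ1 : ρ 1 = e.2 := congrArg Prod.snd hfirst
  have he' : (e.2, ρ 2) ∈ E := by rw [← hρ1]; exact hplay 1
  have hσfol : FollowsStrat V0 (πs (ρ 2)) (shift (shift ρ)) := by
    intro j hj
    have h1 := hfol (j + 1) hj
    rw [hist_succ] at h1
    simp only [hπdef] at h1
    rw [if_neg (by simp)] at h1
    have hhead : (shift ρ 0 :: hist (shift (shift ρ)) j).tail.headD (shift ρ (j + 1)) = ρ 2 := by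
      cases j with
      | zero => simp [hist_zero, shift]
      | succ j => rw [hist_succ]; simp [shift]
    rw [hhead] at h1
    simp only [List.tail_cons] at h1
    exact h1
  have hσmem : shift ρ ∈ En w ((c : ℤ) + w e).toNat := by
    refine hs2 (ρ 2) he' (shift ρ) (fun i => hplay (i + 1)) ?_ hσfol
    show (ρ 1, ρ 2) = (e.2, ρ 2)
    rw [hρ1]
  exact en_of_shift hc hfirst hσmem

lemma osub_le_of_le {l : ℕ∞} {a : ℤ} {c : ℕ} (hc : 0 ≤ (c : ℤ) + a)
    (h : l ≤ ((((c : ℤ) + a).toNat : ℕ) : ℕ∞)) : osub l a ≤ (c : ℕ∞) := by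
  rw [osub_le_iff]
  have hne : l ≠ ⊤ := by
    intro ht; rw [ht] at h; exact absurd h (by simp)
  obtain ⟨n, rfl⟩ : ∃ n : ℕ, l = (n : ℕ∞) := ⟨l.toNat, (ENat.coe_toNat hne).symm⟩
  refine ⟨n, rfl, ?_⟩
  have hn : n ≤ ((c : ℤ) + a).toNat := by exact_mod_cast h
  omega

lemma le_of_osub_le {l : ℕ∞} {a : ℤ} {c : ℕ} (h : osub l a ≤ (c : ℕ∞)) :
    0 ≤ (c : ℤ) + a ∧ l ≤ ((((c : ℤ) + a).toNat : ℕ) : ℕ∞) := by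
  rw [osub_le_iff] at h
  obtain ⟨n, rfl, hn⟩ := h
  have h0 : 0 ≤ (c : ℤ) + a := le_trans (by positivity) hn
  refine ⟨h0, ?_⟩
  have : n ≤ ((c : ℤ) + a).toNat := by omega
  exact_mod_cast this

lemma le_coe_of_lt_coe_succ {x : ℕ∞} {c : ℕ} (h : x < ((c + 1 : ℕ) : ℕ∞)) :
    x ≤ (c : ℕ∞) := by
  have hne : x ≠ ⊤ := h.ne_top
  obtain ⟨n, rfl⟩ : ∃ n : ℕ, x = (n : ℕ∞) := ⟨x.toNat, (ENat.coe_toNat hne).symm⟩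
  have : n < c + 1 := by exact_mod_cast h
  exact_mod_cast Nat.lt_succ_iff.mp this

end S2


open QaSTelPaper S2 in
/-- the edge-optimal value function `optE` is a fixed point of the edge
operator `O_E`. -/
theorem statement2 {V : Type*} [Fintype V]
    (V0 : Set V) (E : Set (V × V)) (hE : ∀ v : V, ∃ v', (v, v') ∈ E)
    (w : V × V → ℤ) (W : ℕ) (hw : ∀ e ∈ E, |w e| ≤ (W : ℤ)) :
    ∀ e ∈ E, OE V0 E w (optE V0 E w) e = optE V0 E w e := by
  intro e he
  unfold OE
  by_cases hv : e.2 ∈ V0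
  · rw [if_pos hv]
    apply le_antisymm
    · rcases eq_or_ne (optE V0 E w e) ⊤ with htop | htop
      · rw [htop]; exact le_top
      obtain ⟨c, hc⟩ : ∃ c : ℕ, optE V0 E w e = (c : ℕ∞) :=
        ⟨(optE V0 E w e).toNat, (ENat.coe_toNat htop).symm⟩
      have hpe : Pe V0 E w e c := optE_le_iff.mp (le_of_eq hc)
      obtain ⟨π, hπ, hg⟩ := hpe
      have hinit : 0 ≤ (c : ℤ) + w e := forward_init hE he ⟨π, hπ, hg⟩
      have he' : (e.2, π ([] : List V) e.2) ∈ E := hπ [] e.2 hv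
      have hpe' : Pe V0 E w (e.2, π ([] : List V) e.2) ((c : ℤ) + w e).toNat :=
        forward_succ he hπ hg hinit _ rfl (fun _ => rfl)
      have hle : osub (optE V0 E w (e.2, π ([] : List V) e.2)) (w e) ≤ (c : ℕ∞) :=
        osub_le_of_le hinit (optE_le_iff.mpr hpe')
      rw [hc]
      exact le_trans (sInf_le ⟨_, he', rfl, rfl⟩) hle
    · rcases eq_or_ne
        (sInf {x : ℕ∞ | ∃ e' ∈ E, e'.1 = e.2 ∧ x = osub (optE V0 E w e') (w e)}) ⊤
        with htop | htop
      · rw [htop]; exact le_top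
      obtain ⟨c, hc⟩ : ∃ c : ℕ,
          sInf {x : ℕ∞ | ∃ e' ∈ E, e'.1 = e.2 ∧ x = osub (optE V0 E w e') (w e)} = (c : ℕ∞) :=
        ⟨_, (ENat.coe_toNat htop).symm⟩
      rw [hc]
      have hlt : sInf {x : ℕ∞ | ∃ e' ∈ E, e'.1 = e.2 ∧ x = osub (optE V0 E w e') (w e)}
          < ((c + 1 : ℕ) : ℕ∞) := by
        rw [hc]; exact_mod_cast Nat.lt_succ_self c
      obtain ⟨x, hx, hxlt⟩ := sInf_lt_iff.mp hlt
      obtain ⟨e', he'E, he'1, rfl⟩ := hx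
      have hxle : osub (optE V0 E w e') (w e) ≤ (c : ℕ∞) := le_coe_of_lt_coe_succ hxlt
      obtain ⟨hc0, hmu⟩ := le_of_osub_le hxle
      have hpe' : Pe V0 E w e' ((c : ℤ) + w e).toNat := optE_le_iff.mp hmu
      exact optE_le_iff.mpr (backward_V0 hE hv he'E he'1 hc0 hpe')
  · rw [if_neg hv]
    apply le_antisymm
    · apply sSup_le
      rintro x ⟨e', he'E, he'1, rfl⟩
      rcases eq_or_ne (optE V0 E w e) ⊤ with htop | htop
      · rw [htop]; exact le_top
      obtain ⟨c, hc⟩ : ∃ c : ℕ, optE V0 E w e = (c : ℕ∞) :=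
        ⟨(optE V0 E w e).toNat, (ENat.coe_toNat htop).symm⟩
      have hpe : Pe V0 E w e c := optE_le_iff.mp (le_of_eq hc)
      obtain ⟨π, hπ, hg⟩ := hpe
      have hinit : 0 ≤ (c : ℤ) + w e := forward_init hE he ⟨π, hπ, hg⟩
      have hpe' : Pe V0 E w e' ((c : ℤ) + w e).toNat :=
        forward_succ he hπ hg hinit e' he'1 (fun h => absurd h hv)
      rw [hc]
      exact osub_le_of_le hinit (optE_le_iff.mpr hpe')
    · rcases eq_or_ne
        (sSup {x : ℕ∞ | ∃ e' ∈ E, e'.1 = e.2 ∧ x = osub (optE V0 E w e') (w e)}) ⊤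
        with htop | htop
      · rw [htop]; exact le_top
      obtain ⟨c, hc⟩ : ∃ c : ℕ,
          sSup {x : ℕ∞ | ∃ e' ∈ E, e'.1 = e.2 ∧ x = osub (optE V0 E w e') (w e)} = (c : ℕ∞) :=
        ⟨_, (ENat.coe_toNat htop).symm⟩
      have hub : ∀ x ∈ {x : ℕ∞ | ∃ e' ∈ E, e'.1 = e.2 ∧ x = osub (optE V0 E w e') (w e)},
          x ≤ (c : ℕ∞) := fun x hx => hc ▸ le_sSup hx
      obtain ⟨v'', hv''⟩ := hE e.2
      have hx0 : osub (optE V0 E w (e.2, v'')) (w e) ≤ (c : ℕ∞) :=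
        hub _ ⟨_, hv'', rfl, rfl⟩
      have hc0 : 0 ≤ (c : ℤ) + w e := (le_of_osub_le hx0).1
      have hall : ∀ e' ∈ E, e'.1 = e.2 → Pe V0 E w e' ((c : ℤ) + w e).toNat := by
        intro e' he'E he'1
        have := hub _ ⟨e', he'E, he'1, rfl⟩
        exact optE_le_iff.mp (le_of_osub_le this).2
      rw [hc]
      exact optE_le_iff.mpr (backward_all hE hc0 hall)
end
end

section
/- Let G be a game graph with weight function w. The edge-optimal value function optE is the least pre-fixed point of the edge operator O_E: if μ : E → ℕ ∪ {∞} satisfies O_E(μ)(e) ≤ μ(e) for every edge e, then optE(e) ≤ μ(e) for every edge e. -/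
open scoped Classical

noncomputable section

namespace S3Aux

variable {V : Type*}

/-- Credit accumulated along the history `H` followed by node `v`. -/
def hcredit (w : V × V → ℤ) (H : List V) (v : V) : ℤ :=
  ∑ j ∈ Finset.range H.length, w ((H ++ [v]).getD j v, (H ++ [v]).getD (j + 1) v)

lemma getD_hist (ρ : ℕ → V) (i : ℕ) (k : ℕ) (hk : k ≤ i) (d : V) :
    (QaSTelPaper.hist (QaSTelPaper.shift ρ) i ++ [ρ (i + 1)]).getD k d = ρ (k + 1) := by
  have hlen : (QaSTelPaper.hist (QaSTelPaper.shift ρ) i).length = i := by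
    simp [QaSTelPaper.hist]
  rcases lt_or_eq_of_le hk with h | h
  · rw [List.getD_eq_getElem _ _ (by simp [hlen]; omega)]
    rw [List.getElem_append_left (by omega)]
    simp [QaSTelPaper.hist, QaSTelPaper.shift]
  · subst h
    rw [List.getD_eq_getElem _ _ (by simp [hlen])]
    rw [List.getElem_append_right (by omega)]
    simp [hlen]

lemma hcredit_hist (w : V × V → ℤ) (ρ : ℕ → V) (i : ℕ) :
    hcredit w (QaSTelPaper.hist (QaSTelPaper.shift ρ) i) (ρ (i + 1)) =
      ∑ j ∈ Finset.range i, w (ρ (j + 1), ρ (j + 2)) := by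
  unfold hcredit
  have hlen : (QaSTelPaper.hist (QaSTelPaper.shift ρ) i).length = i := by
    simp [QaSTelPaper.hist]
  rw [hlen]
  refine Finset.sum_congr rfl fun j hj => ?_
  have hj' : j < i := Finset.mem_range.mp hj
  rw [getD_hist ρ i j (by omega), getD_hist ρ i (j + 1) (by omega)]

lemma osub_le_imp (l m : ℕ∞) (a : ℤ) (hm : m ≠ ⊤) (h : QaSTelPaper.osub l a ≤ m) :
    l ≠ ⊤ ∧ (l.toNat : ℤ) ≤ (m.toNat : ℤ) + a := by
  unfold QaSTelPaper.osub at h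
  split at h
  · exact absurd (top_le_iff.mp h) hm
  · next hl =>
    refine ⟨hl, ?_⟩
    lift m to ℕ using hm
    lift l to ℕ using hl
    have h2 : ((l : ℤ) - a).toNat ≤ m := by
      simpa using (by exact_mod_cast h : (((l : ℤ) - a).toNat : ℕ) ≤ m)
    simp only [ENat.toNat_coe]
    omega

/-- The strategy: pick a successor whose μ-value is at most the current credit. -/
def strat (E : Set (V × V)) (hE : ∀ v : V, ∃ v', (v, v') ∈ E)
    (w : V × V → ℤ) (μ : V × V → ℕ∞) (c0 : ℤ) : List V → V → V :=
  fun H v =>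
    if h : ∃ v', (v, v') ∈ E ∧ μ (v, v') ≠ ⊤ ∧
        ((μ (v, v')).toNat : ℤ) ≤ c0 + hcredit w H v
    then h.choose else (hE v).choose

lemma strat_isStrategy (V0 : Set V) (E : Set (V × V)) (hE : ∀ v : V, ∃ v', (v, v') ∈ E)
    (w : V × V → ℤ) (μ : V × V → ℕ∞) (c0 : ℤ) :
    QaSTelPaper.IsStrategy V0 E (strat E hE w μ c0) := by
  intro H v _
  unfold strat
  split
  · next h => exact h.choose_spec.1
  · exact (hE v).choose_spec

end S3Aux

open QaSTelPaper in
/-- `optE` is the least pre-fixed point of the edge operator `O_E`. -/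
theorem statement3 {V : Type*} [Fintype V]
    (V0 : Set V) (E : Set (V × V)) (hE : ∀ v : V, ∃ v', (v, v') ∈ E)
    (w : V × V → ℤ) (W : ℕ) (hw : ∀ e ∈ E, |w e| ≤ (W : ℤ))
    (μ : V × V → ℕ∞) (hμ : ∀ e ∈ E, OE V0 E w μ e ≤ μ e) :
    ∀ e ∈ E, optE V0 E w e ≤ μ e := by
  intro e heE
  by_cases hμeT : μ e = ⊤
  · rw [hμeT]; exact le_top
  unfold optE
  refine sInf_le ?_
  intro c hc
  set c0 : ℤ := (c : ℤ) + w e with hc0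
  refine ⟨S3Aux.strat E hE w μ c0, S3Aux.strat_isStrategy V0 E hE w μ c0, ?_⟩
  intro ρ hPlay h01 hFollow
  have hμec : ((μ e).toNat : ℤ) ≤ (c : ℤ) := by
    have h1 : (((μ e).toNat : ℕ) : ℕ∞) ≤ (c : ℕ∞) := by
      rw [ENat.coe_toNat hμeT]; exact hc
    have h2 : (μ e).toNat ≤ c := by exact_mod_cast h1
    exact_mod_cast h2
  have key : ∀ i, μ (ρ i, ρ (i + 1)) ≠ ⊤ ∧
      ((μ (ρ i, ρ (i + 1))).toNat : ℤ) ≤ (c : ℤ) + prefW w ρ i := by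
    intro i
    induction i with
    | zero =>
      rw [show (ρ 0, ρ 1) = e from h01]
      refine ⟨hμeT, ?_⟩
      simp [prefW, hμec]
    | succ i ih =>
      obtain ⟨ihT, ihB⟩ := ih
      have heiE : (ρ i, ρ (i + 1)) ∈ E := hPlay i
      have hO := hμ _ heiE
      have hprefsucc : prefW w ρ (i + 1) = prefW w ρ i + w (ρ i, ρ (i + 1)) :=
        Finset.sum_range_succ _ i
      have hcr : c0 + S3Aux.hcredit w (hist (shift ρ) i) (ρ (i + 1)) =
          (c : ℤ) + prefW w ρ (i + 1) := by
        rw [S3Aux.hcredit_hist, hc0, ← h01]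
        rw [prefW, Finset.sum_range_succ']
        ring
      by_cases hv : ρ (i + 1) ∈ V0
      · rw [OE, if_pos (show ((ρ i, ρ (i + 1)) : V × V).2 ∈ V0 from hv)] at hO
        have hSne : Set.Nonempty {x : ℕ∞ | ∃ e' ∈ E, e'.1 = ((ρ i, ρ (i + 1)) : V × V).2 ∧
            x = osub (μ e') (w (ρ i, ρ (i + 1)))} := by
          obtain ⟨v', hv'⟩ := hE (ρ (i + 1))
          exact ⟨_, ⟨(ρ (i + 1), v'), hv', rfl, rfl⟩⟩
        obtain ⟨e', he'E, he'1, he'x⟩ := csInf_mem hSne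
        rw [he'x] at hO
        obtain ⟨hT', hB'⟩ := S3Aux.osub_le_imp _ _ _ ihT hO
        have he'eq : ((ρ (i + 1), e'.2) : V × V) = e' := Prod.ext he'1.symm rfl
        have hcond : ∃ v', (ρ (i + 1), v') ∈ E ∧ μ (ρ (i + 1), v') ≠ ⊤ ∧
            ((μ (ρ (i + 1), v')).toNat : ℤ) ≤
              c0 + S3Aux.hcredit w (hist (shift ρ) i) (ρ (i + 1)) := by
          refine ⟨e'.2, ?_, ?_, ?_⟩
          · rwa [he'eq]
          · rwa [he'eq]
          · rw [he'eq, hcr, hprefsucc]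
            omega
        have hstep : ρ (i + 1 + 1) =
            S3Aux.strat E hE w μ c0 (hist (shift ρ) i) (ρ (i + 1)) := hFollow i hv
        unfold S3Aux.strat at hstep
        rw [dif_pos hcond] at hstep
        have hspec := hcond.choose_spec
        rw [show ρ (i + 1 + 1) = hcond.choose from hstep]
        refine ⟨hspec.2.1, ?_⟩
        calc ((μ (ρ (i + 1), hcond.choose)).toNat : ℤ) ≤
            c0 + S3Aux.hcredit w (hist (shift ρ) i) (ρ (i + 1)) := hspec.2.2
          _ = (c : ℤ) + prefW w ρ (i + 1) := hcr
      · rw [OE, if_neg (show ¬ ((ρ i, ρ (i + 1)) : V × V).2 ∈ V0 from hv)] at hO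
        have hx : osub (μ (ρ (i + 1), ρ (i + 1 + 1))) (w (ρ i, ρ (i + 1))) ∈
            {x : ℕ∞ | ∃ e' ∈ E, e'.1 = ((ρ i, ρ (i + 1)) : V × V).2 ∧
              x = osub (μ e') (w (ρ i, ρ (i + 1)))} :=
          ⟨(ρ (i + 1), ρ (i + 1 + 1)), hPlay (i + 1), rfl, rfl⟩
        have hle := le_trans (le_sSup hx) hO
        obtain ⟨hT', hB'⟩ := S3Aux.osub_le_imp _ _ _ ihT hle
        exact ⟨hT', by rw [hprefsucc]; omega⟩
  intro i
  have h1 := (key i).2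
  have h2 : (0 : ℤ) ≤ ((μ (ρ i, ρ (i + 1))).toNat : ℤ) := by positivity
  exact le_trans h2 h1
end
end

section
/- Let G = (V,E) be a game graph with weight function w bounded by W. For every edge e ∈ E, either optE(e) ≤ |V|·W or optE(e) = ∞. -/
open scoped Classical

noncomputable section

namespace QaSTelPaper

variable {V : Type*}

-- helpers
lemma prefW_zero (w : V × V → ℤ) (ρ : ℕ → V) : prefW w ρ 0 = 0 := by simp [prefW]

lemma prefW_succ (w : V × V → ℤ) (ρ : ℕ → V) (n : ℕ) :
    prefW w ρ (n + 1) = prefW w ρ n + w (ρ n, ρ (n + 1)) := by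
  simp [prefW, Finset.sum_range_succ]

lemma prefW_congr {w : V × V → ℤ} {ρ ρ' : ℕ → V} {k : ℕ}
    (h : ∀ j ≤ k, ρ j = ρ' j) : prefW w ρ k = prefW w ρ' k := by
  unfold prefW
  refine Finset.sum_congr rfl fun j hj => ?_
  have hj' := Finset.mem_range.mp hj
  rw [h j (by omega), h (j + 1) (by omega)]

lemma hist_congr {ρ ρ' : ℕ → V} {i : ℕ} (h : ∀ j < i, ρ j = ρ' j) :
    hist ρ i = hist ρ' i := by
  unfold hist
  congr 1
  funext j
  exact h j j.2

lemma hist_succ (ρ : ℕ → V) (n : ℕ) : hist ρ (n + 1) = hist ρ n ++ [ρ n] := by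
  unfold hist
  rw [List.ofFn_succ']
  simp [List.concat_eq_append]

lemma hist_shift (ρ : ℕ → V) (m : ℕ) :
    hist (shift ρ) m = (hist ρ (m + 1)).drop 1 := by
  unfold hist
  rw [List.ofFn_succ]
  simp [shift]


section Build
variable (V0 : Set V) (E : Set (V × V)) (hE : ∀ v : V, ∃ v', (v, v') ∈ E)
  (π : List V → V → V)

noncomputable def nxt (h : List V) (v : V) : V :=
  if v ∈ V0 then π h v else (hE v).choose

lemma nxt_mem (hπ : IsStrategy V0 E π) (h : List V) (v : V) :
    (v, nxt V0 E hE π h v) ∈ E := by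
  unfold nxt; split
  · exact hπ h v ‹_›
  · exact (hE v).choose_spec

noncomputable def tr (f0 : ℕ → V) (K : ℕ) : ℕ → List V × V
  | 0 => ([], f0 0)
  | n+1 =>
    let p := tr f0 K n
    (p.1 ++ [p.2],
      if n + 1 ≤ K then f0 (n + 1) else nxt V0 E hE π (p.1.drop 1) p.2)

noncomputable def bplay (f0 : ℕ → V) (K : ℕ) (n : ℕ) : V := (tr V0 E hE π f0 K n).2

variable (f0 : ℕ → V) (K : ℕ)

lemma bplay_zero : bplay V0 E hE π f0 K 0 = f0 0 := rfl

lemma bplay_le : ∀ i ≤ K, bplay V0 E hE π f0 K i = f0 i := by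
  intro i hi
  cases i with
  | zero => rfl
  | succ n => simp only [bplay, tr, if_pos hi]

lemma tr_fst : ∀ n, (tr V0 E hE π f0 K n).1 = hist (bplay V0 E hE π f0 K) n := by
  intro n
  induction n with
  | zero => simp [tr, hist]
  | succ n ih =>
    show (tr V0 E hE π f0 K n).1 ++ [(tr V0 E hE π f0 K n).2] = _
    rw [ih, hist_succ]
    rfl

lemma bplay_gt (n : ℕ) (hn : K < n + 1) :
    bplay V0 E hE π f0 K (n + 1)
      = nxt V0 E hE π ((hist (bplay V0 E hE π f0 K) n).drop 1) (bplay V0 E hE π f0 K n) := by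
  show (tr V0 E hE π f0 K (n+1)).2 = _
  simp only [tr, if_neg (by omega : ¬ n + 1 ≤ K), tr_fst]
  rfl

lemma bplay_isPlay (hπ : IsStrategy V0 E π) (hf0 : ∀ i < K, (f0 i, f0 (i + 1)) ∈ E) :
    IsPlay E (bplay V0 E hE π f0 K) := by
  intro i
  by_cases hi : i + 1 ≤ K
  · rw [bplay_le V0 E hE π f0 K i (by omega), bplay_le V0 E hE π f0 K (i+1) hi]
    exact hf0 i (by omega)
  · rw [bplay_gt V0 E hE π f0 K i (by omega)]
    exact nxt_mem V0 E hE π hπ _ _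

lemma bplay_follows
    (hfol : ∀ i, i + 2 ≤ K → f0 (i + 1) ∈ V0 →
      f0 (i + 2) = π (hist (shift f0) i) (f0 (i + 1))) :
    FollowsStrat V0 π (shift (bplay V0 E hE π f0 K)) := by
  intro i hi
  show bplay V0 E hE π f0 K (i + 1 + 1)
      = π (hist (shift (bplay V0 E hE π f0 K)) i) (bplay V0 E hE π f0 K (i + 1))
  have hi' : bplay V0 E hE π f0 K (i + 1) ∈ V0 := hi
  by_cases hK : i + 2 ≤ K
  · have h1 : bplay V0 E hE π f0 K (i + 1) = f0 (i + 1) :=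
      bplay_le V0 E hE π f0 K (i + 1) (by omega)
    have h2 : bplay V0 E hE π f0 K (i + 1 + 1) = f0 (i + 2) :=
      bplay_le V0 E hE π f0 K (i + 1 + 1) (by omega)
    have h3 : hist (shift (bplay V0 E hE π f0 K)) i = hist (shift f0) i := by
      apply hist_congr
      intro j hj
      exact bplay_le V0 E hE π f0 K (j + 1) (by omega)
    rw [h1, h2, h3]
    exact hfol i hK (h1 ▸ hi')
  · rw [bplay_gt V0 E hE π f0 K (i + 1) (by omega)]
    unfold nxt
    rw [if_pos hi', hist_shift]

end Build

section Potential
variable (V0 : Set V) (E : Set (V × V)) (hE : ∀ v : V, ∃ v', (v, v') ∈ E)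
  (w : V × V → ℤ) (e : V × V) (c : ℕ) (π : List V → V → V)

def Eset (u : V) : Set ℕ :=
  {m | ∃ ρ k, IsPlay E ρ ∧ (ρ 0, ρ 1) = e ∧ FollowsStrat V0 π (shift ρ) ∧
      1 ≤ k ∧ ρ k = u ∧ ((c : ℤ) + prefW w ρ k).toNat = m}

def Dset : Set V := {u | (Eset V0 E w e c π u).Nonempty}

noncomputable def pot (u : V) : ℕ := sInf (Eset V0 E w e c π u)

lemma exists_wit {u : V} (h : u ∈ Dset V0 E w e c π) :
    ∃ ρ : ℕ → V, ∃ k : ℕ, IsPlay E ρ ∧ (ρ 0, ρ 1) = e ∧ FollowsStrat V0 π (shift ρ) ∧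
      1 ≤ k ∧ ρ k = u ∧ ((c : ℤ) + prefW w ρ k).toNat = pot V0 E w e c π u :=
  Nat.sInf_mem h

noncomputable def witρ {u : V} (h : u ∈ Dset V0 E w e c π) : ℕ → V :=
  (exists_wit V0 E w e c π h).choose

noncomputable def witk {u : V} (h : u ∈ Dset V0 E w e c π) : ℕ :=
  (exists_wit V0 E w e c π h).choose_spec.choose

lemma wit_spec {u : V} (h : u ∈ Dset V0 E w e c π) :
    IsPlay E (witρ V0 E w e c π h) ∧
      (witρ V0 E w e c π h 0, witρ V0 E w e c π h 1) = e ∧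
      FollowsStrat V0 π (shift (witρ V0 E w e c π h)) ∧
      1 ≤ witk V0 E w e c π h ∧
      witρ V0 E w e c π h (witk V0 E w e c π h) = u ∧
      ((c : ℤ) + prefW w (witρ V0 E w e c π h) (witk V0 E w e c π h)).toNat
        = pot V0 E w e c π u :=
  (exists_wit V0 E w e c π h).choose_spec.choose_spec

noncomputable def sig (u : V) : V :=
  if h : u ∈ Dset V0 E w e c π then witρ V0 E w e c π h (witk V0 E w e c π h + 1)
  else (hE u).choose

lemma sig_eq {u : V} (h : u ∈ Dset V0 E w e c π) :
    sig V0 E hE w e c π u = witρ V0 E w e c π h (witk V0 E w e c π h + 1) := by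
  simp [sig, dif_pos h]

lemma sig_mem {u : V} : (u, sig V0 E hE w e c π u) ∈ E := by
  unfold sig
  split
  · rename_i h
    have hs := wit_spec V0 E w e c π h
    have := hs.1 (witk V0 E w e c π h)
    rwa [hs.2.2.2.2.1] at this
  · exact (hE u).choose_spec

section WithWin
variable (hπ : IsStrategy V0 E π)
  (hwin : ∀ ρ, IsPlay E ρ → (ρ 0, ρ 1) = e → FollowsStrat V0 π (shift ρ) →
    ∀ i, 0 ≤ (c : ℤ) + prefW w ρ i)

include hE hπ hwin

lemma pot_base (he : e ∈ E) :
    e.2 ∈ Dset V0 E w e c π ∧ (pot V0 E w e c π e.2 : ℤ) ≤ (c : ℤ) + w e := by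
  classical
  set f0 : ℕ → V := fun i => if i = 0 then e.1 else e.2 with hf0def
  have hf0 : ∀ i < 1, (f0 i, f0 (i + 1)) ∈ E := by
    intro i hi
    interval_cases i
    simpa [hf0def] using he
  have hfol : ∀ i, i + 2 ≤ 1 → f0 (i + 1) ∈ V0 →
      f0 (i + 2) = π (hist (shift f0) i) (f0 (i + 1)) := by
    intro i hi; omega
  set ρ' := bplay V0 E hE π f0 1 with hρ'
  have hplay : IsPlay E ρ' := bplay_isPlay V0 E hE π f0 1 hπ hf0
  have h0 : ρ' 0 = e.1 := by
    rw [hρ', bplay_le V0 E hE π f0 1 0 (by omega)]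
    simp [hf0def]
  have h1 : ρ' 1 = e.2 := by
    rw [hρ', bplay_le V0 E hE π f0 1 1 (by omega)]
    simp [hf0def]
  have hedge : (ρ' 0, ρ' 1) = e := by rw [h0, h1]
  have hfol' : FollowsStrat V0 π (shift ρ') := bplay_follows V0 E hE π f0 1 hfol
  have hen := hwin ρ' hplay hedge hfol'
  have hpw : prefW w ρ' 1 = w e := by
    rw [prefW_succ, prefW_zero, h0, h1]
    simp
  have hmem : (((c : ℤ) + w e).toNat) ∈ Eset V0 E w e c π e.2 :=
    ⟨ρ', 1, hplay, hedge, hfol', le_refl 1, h1, by rw [hpw]⟩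
  constructor
  · exact ⟨_, hmem⟩
  · have hle : pot V0 E w e c π e.2 ≤ ((c : ℤ) + w e).toNat := Nat.sInf_le hmem
    have hnn : 0 ≤ (c : ℤ) + w e := by
      have := hen 1
      rwa [hpw] at this
    calc (pot V0 E w e c π e.2 : ℤ) ≤ (((c : ℤ) + w e).toNat : ℤ) := by exact_mod_cast hle
      _ = (c : ℤ) + w e := Int.toNat_of_nonneg hnn

lemma pot_step {u u' : V} (hu : u ∈ Dset V0 E w e c π) (he' : (u, u') ∈ E)
    (hσ : u ∈ V0 → u' = sig V0 E hE w e c π u) :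
    u' ∈ Dset V0 E w e c π ∧
      (pot V0 E w e c π u' : ℤ) ≤ (pot V0 E w e c π u : ℤ) + w (u, u') := by
  classical
  obtain ⟨hplayu, hedgeu, hfolu, hk1, hku, hpotu⟩ := wit_spec V0 E w e c π hu
  set ρu := witρ V0 E w e c π hu with hρu
  set k := witk V0 E w e c π hu with hkdef
  set f0 : ℕ → V := fun i => if i ≤ k then ρu i else u' with hf0def
  have hf00 : ∀ i ≤ k, f0 i = ρu i := by
    intro i hi; simp [hf0def, hi]
  have hf0k1 : f0 (k + 1) = u' := by simp [hf0def]
  have hf0 : ∀ i < k + 1, (f0 i, f0 (i + 1)) ∈ E := by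
    intro i hi
    rcases Nat.lt_or_ge i k with h | h
    · rw [hf00 i (by omega), hf00 (i+1) (by omega)]
      exact hplayu i
    · have hik : i = k := by omega
      rw [hik, hf00 k le_rfl, hf0k1, hku]
      exact he'
  have hfol : ∀ i, i + 2 ≤ k + 1 → f0 (i + 1) ∈ V0 →
      f0 (i + 2) = π (hist (shift f0) i) (f0 (i + 1)) := by
    intro i hi hv
    have hi1 : i + 1 ≤ k := by omega
    have hhist : hist (shift f0) i = hist (shift ρu) i := by
      apply hist_congr
      intro j hj
      exact hf00 (j + 1) (by omega)
    have hv' : ρu (i + 1) ∈ V0 := by rwa [hf00 (i+1) hi1] at hv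
    have hstep := hfolu i hv'
    rcases Nat.lt_or_ge (i + 2) (k + 1) with h | h
    · rw [hf00 (i+1) hi1, hf00 (i+2) (by omega), hhist]
      exact hstep
    · have hik : i + 1 = k := by omega
      have hu0 : u ∈ V0 := by
        have : ρu (i + 1) = u := by rw [hik]; exact hku
        rwa [this] at hv'
      have : i + 2 = k + 1 := by omega
      rw [hf00 (i+1) hi1, this, hf0k1, hhist, hσ hu0, sig_eq V0 E hE w e c π hu,
        ← hkdef, ← hρu, ← hik]
      exact hstep
  set ρ' := bplay V0 E hE π f0 (k + 1) with hρ'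
  have hagree : ∀ j ≤ k + 1, ρ' j = f0 j := fun j hj => bplay_le V0 E hE π f0 (k+1) j hj
  have hplay : IsPlay E ρ' := bplay_isPlay V0 E hE π f0 (k+1) hπ hf0
  have hedge : (ρ' 0, ρ' 1) = e := by
    rw [hagree 0 (by omega), hagree 1 (by omega), hf00 0 (by omega), hf00 1 (by omega)]
    exact hedgeu
  have hfol' : FollowsStrat V0 π (shift ρ') := bplay_follows V0 E hE π f0 (k+1) hfol
  have hen := hwin ρ' hplay hedge hfol'
  have hρ'k : ρ' k = u := by rw [hagree k (by omega), hf00 k le_rfl, hku]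
  have hρ'k1 : ρ' (k + 1) = u' := by rw [hagree (k+1) le_rfl, hf0k1]
  have hpw : prefW w ρ' (k + 1) = prefW w ρu k + w (u, u') := by
    rw [prefW_succ, hρ'k, hρ'k1]
    congr 1
    apply prefW_congr
    intro j hj
    rw [hagree j (by omega), hf00 j hj]
  have hmem : (((c : ℤ) + prefW w ρ' (k + 1)).toNat) ∈ Eset V0 E w e c π u' :=
    ⟨ρ', k + 1, hplay, hedge, hfol', by omega, hρ'k1, rfl⟩
  have hpotZ : (pot V0 E w e c π u : ℤ) = (c : ℤ) + prefW w ρu k := by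
    rw [← hpotu]
    exact Int.toNat_of_nonneg (hwin ρu hplayu hedgeu hfolu k)
  constructor
  · exact ⟨_, hmem⟩
  · have hle : pot V0 E w e c π u' ≤ ((c : ℤ) + prefW w ρ' (k + 1)).toNat :=
      Nat.sInf_le hmem
    calc (pot V0 E w e c π u' : ℤ)
        ≤ ((((c : ℤ) + prefW w ρ' (k + 1)).toNat : ℕ) : ℤ) := by exact_mod_cast hle
      _ = (c : ℤ) + prefW w ρ' (k + 1) := Int.toNat_of_nonneg (hen (k + 1))
      _ = (pot V0 E w e c π u : ℤ) + w (u, u') := by rw [hpw, hpotZ]; ring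

end WithWin
end Potential

section Path
variable (V0 : Set V) (E : Set (V × V)) (hE : ∀ v : V, ∃ v', (v, v') ∈ E)
  (w : V × V → ℤ) (e : V × V) (c : ℕ) (π : List V → V → V)

def SEdge (u u' : V) : Prop :=
  u ∈ Dset V0 E w e c π ∧ (u, u') ∈ E ∧ (u ∈ V0 → u' = sig V0 E hE w e c π u)

variable [Fintype V]
variable (hπ : IsStrategy V0 E π)
  (hwin : ∀ ρ, IsPlay E ρ → (ρ 0, ρ 1) = e → FollowsStrat V0 π (shift ρ) →
    ∀ i, 0 ≤ (c : ℤ) + prefW w ρ i)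

include hE hπ hwin

omit [Fintype V] in
lemma pot_tele : ∀ (k : ℕ) (q : ℕ → V),
    (∀ t < k, SEdge V0 E hE w e c π (q t) (q (t + 1))) →
    (pot V0 E w e c π (q k) : ℤ)
      ≤ (pot V0 E w e c π (q 0) : ℤ) + ∑ t ∈ Finset.range k, w (q t, q (t + 1)) := by
  intro k
  induction k with
  | zero => intro q _; simp
  | succ k ih =>
    intro q hq
    have h1 := ih q (fun t ht => hq t (by omega))
    obtain ⟨hD, hEe, hsig⟩ := hq k (by omega)
    have h2 := (pot_step V0 E hE w e c π hπ hwin hD hEe hsig).2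
    rw [Finset.sum_range_succ]
    push_cast at *
    linarith

lemma path_bound (W : ℕ) (hw : ∀ e' ∈ E, |w e'| ≤ (W : ℤ)) :
    ∀ (k : ℕ) (q : ℕ → V),
    (∀ t < k, SEdge V0 E hE w e c π (q t) (q (t + 1))) →
    ((1 : ℤ) - (Fintype.card V : ℤ)) * (W : ℤ)
      ≤ ∑ t ∈ Finset.range k, w (q t, q (t + 1)) := by
  intro k
  induction k using Nat.strong_induction_on with
  | _ k IH =>
    intro q hq
    by_cases hk : k < Fintype.card V
    · have hterm : ∀ t ∈ Finset.range k, -(W : ℤ) ≤ w (q t, q (t + 1)) := by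
        intro t ht
        have := hw _ (hq t (Finset.mem_range.mp ht)).2.1
        exact neg_le_of_abs_le this
      have hsum : (Finset.range k).card • (-(W : ℤ))
          ≤ ∑ t ∈ Finset.range k, w (q t, q (t + 1)) :=
        Finset.card_nsmul_le_sum _ _ _ hterm
      rw [Finset.card_range, nsmul_eq_mul] at hsum
      have hkn : (k : ℤ) ≤ (Fintype.card V : ℤ) - 1 := by
        have h1 : (k : ℤ) + 1 ≤ (Fintype.card V : ℤ) := by exact_mod_cast hk
        linarith
      have hW0 : (0 : ℤ) ≤ (W : ℤ) := Int.natCast_nonneg W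
      nlinarith
    · push_neg at hk
      set n := Fintype.card V with hn
      have hcard : Fintype.card V < Fintype.card (Fin (n + 1)) := by
        simp [hn]
      obtain ⟨a, b, hab, hqab⟩ :=
        Fintype.exists_ne_map_eq_of_card_lt (fun t : Fin (n + 1) => (q t : V)) hcard
      obtain ⟨i, j, hij, hjn, hqij⟩ : ∃ i j : ℕ, i < j ∧ j ≤ n ∧ q i = q j := by
        rcases lt_or_gt_of_ne (Fin.val_ne_of_ne hab) with h | h
        · exact ⟨a, b, h, Nat.lt_succ_iff.mp b.2, hqab⟩
        · exact ⟨b, a, h, Nat.lt_succ_iff.mp a.2, hqab.symm⟩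
      set d := j - i with hd
      have hd1 : 1 ≤ d := by omega
      have hjk : j ≤ k := by omega
      set k' := k - d with hk'
      set q' : ℕ → V := fun t => if t < i then q t else q (t + d) with hq'def
      have hq'lo : ∀ t ≤ i, q' t = q t := by
        intro t ht
        rcases lt_or_eq_of_le ht with h | h
        · simp [hq'def, h]
        · subst h
          simp only [hq'def, if_neg (lt_irrefl t)]
          have h2 : t + d = j := by omega
          rw [h2, ← hqij]
      have hq'hi : ∀ t, i ≤ t → q' t = q (t + d) := by
        intro t ht
        rcases lt_or_eq_of_le ht with h | h
        · simp [hq'def, if_neg (by omega : ¬ t < i)]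
        · subst h; simp [hq'def]
      have hpath' : ∀ t < k', SEdge V0 E hE w e c π (q' t) (q' (t + 1)) := by
        intro t ht
        by_cases hti : t + 1 ≤ i
        · rw [hq'lo t (by omega), hq'lo (t + 1) hti]
          exact hq t (by omega)
        · push_neg at hti
          rw [hq'hi t (by omega), hq'hi (t + 1) (by omega)]
          have h1 : t + 1 + d = (t + d) + 1 := by omega
          rw [h1]
          exact hq (t + d) (by omega)
      -- sum splitting
      have hA : ∑ t ∈ Finset.Ico 0 i, w (q' t, q' (t + 1))
          = ∑ t ∈ Finset.Ico 0 i, w (q t, q (t + 1)) := by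
        refine Finset.sum_congr rfl fun t ht => ?_
        have ht' := Finset.mem_Ico.mp ht
        rw [hq'lo t (by omega), hq'lo (t + 1) (by omega)]
      have hB : ∑ t ∈ Finset.Ico i k', w (q' t, q' (t + 1))
          = ∑ t ∈ Finset.Ico j k, w (q t, q (t + 1)) := by
        rw [Finset.sum_Ico_eq_sum_range, Finset.sum_Ico_eq_sum_range]
        have hlen : k' - i = k - j := by omega
        rw [hlen]
        refine Finset.sum_congr rfl fun t ht => ?_
        rw [hq'hi (i + t) (by omega), hq'hi (i + t + 1) (by omega)]
        have h1 : i + t + d = j + t := by omega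
        have h2 : i + t + 1 + d = j + t + 1 := by omega
        rw [h1, h2]
      have hC : 0 ≤ ∑ t ∈ Finset.Ico i j, w (q t, q (t + 1)) := by
        have htele := pot_tele V0 E hE w e c π hπ hwin d (fun t => q (i + t)) ?_
        · have hq0 : q (i + 0) = q i := by norm_num
          have hqd : q (i + d) = q j := by
            have : i + d = j := by omega
            rw [this]
          rw [hq0, hqd, ← hqij] at htele
          have hsum_eq : ∑ t ∈ Finset.Ico i j, w (q t, q (t + 1))
              = ∑ t ∈ Finset.range d, w (q (i + t), q (i + (t + 1))) := by
            rw [Finset.sum_Ico_eq_sum_range, ← hd]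
            refine Finset.sum_congr rfl fun t ht => ?_
            have h1 : i + t + 1 = i + (t + 1) := by omega
            rw [h1]
          rw [hsum_eq]
          linarith
        · intro t ht
          show SEdge V0 E hE w e c π (q (i + t)) (q (i + (t + 1)))
          have h1 : i + (t + 1) = (i + t) + 1 := by omega
          rw [h1]
          exact hq (i + t) (by omega)
      have hsplitq : ∑ t ∈ Finset.range k, w (q t, q (t + 1))
          = (∑ t ∈ Finset.Ico 0 i, w (q t, q (t + 1)))
            + ((∑ t ∈ Finset.Ico i j, w (q t, q (t + 1)))
              + ∑ t ∈ Finset.Ico j k, w (q t, q (t + 1))) := by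
        rw [Finset.range_eq_Ico,
          ← Finset.sum_Ico_consecutive _ (by omega : (0:ℕ) ≤ i) (by omega : i ≤ k),
          ← Finset.sum_Ico_consecutive _ (by omega : i ≤ j) (by omega : j ≤ k)]
      have hsplitq' : ∑ t ∈ Finset.range k', w (q' t, q' (t + 1))
          = (∑ t ∈ Finset.Ico 0 i, w (q' t, q' (t + 1)))
            + ∑ t ∈ Finset.Ico i k', w (q' t, q' (t + 1)) := by
        rw [Finset.range_eq_Ico,
          ← Finset.sum_Ico_consecutive _ (by omega : (0:ℕ) ≤ i) (by omega : i ≤ k')]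
      have hIH := IH k' (by omega) q' hpath'
      rw [hsplitq', hA, hB] at hIH
      rw [hsplitq]
      linarith

lemma good_strategy (he : e ∈ E) (W : ℕ) (hw : ∀ e' ∈ E, |w e'| ≤ (W : ℤ)) :
    ∃ π' : List V → V → V, IsStrategy V0 E π' ∧
      ∀ ρ, IsPlay E ρ → (ρ 0, ρ 1) = e → FollowsStrat V0 π' (shift ρ) →
        ∀ i, -((Fintype.card V : ℤ) * (W : ℤ)) ≤ prefW w ρ i := by
  refine ⟨fun _ v => sig V0 E hE w e c π v, ?_, ?_⟩
  · intro H v _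
    exact sig_mem V0 E hE w e c π
  · intro ρ hplay hedge hfolρ
    have hρ1 : ρ 1 = e.2 := congrArg Prod.snd hedge
    have hD : ∀ t, ρ (t + 1) ∈ Dset V0 E w e c π ∧
        SEdge V0 E hE w e c π (ρ (t + 1)) (ρ (t + 1 + 1)) := by
      intro t
      induction t with
      | zero =>
        have hbase : ρ (0 + 1) ∈ Dset V0 E w e c π := by
          show ρ 1 ∈ _
          rw [hρ1]
          exact (pot_base V0 E hE w e c π hπ hwin he).1
        exact ⟨hbase, hbase, hplay (0 + 1), fun hv => hfolρ 0 hv⟩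
      | succ t ih =>
        obtain ⟨hDt, hS⟩ := ih
        have hmem : ρ (t + 1 + 1) ∈ Dset V0 E w e c π :=
          (pot_step V0 E hE w e c π hπ hwin hS.1 hS.2.1 hS.2.2).1
        exact ⟨hmem, hmem, hplay (t + 1 + 1), fun hv => hfolρ (t + 1) hv⟩
    intro i
    cases i with
    | zero =>
      rw [prefW_zero]
      have h1 : (0 : ℤ) ≤ (Fintype.card V : ℤ) * (W : ℤ) := by positivity
      linarith
    | succ m =>
      have hsplit : prefW w ρ (m + 1)
          = w (ρ 0, ρ 1) + ∑ t ∈ Finset.range m, w (ρ (t + 1), ρ (t + 1 + 1)) := by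
        unfold prefW
        rw [Finset.sum_range_succ', add_comm]
      have hpb := path_bound V0 E hE w e c π hπ hwin W hw m (fun t => ρ (t + 1))
        (fun t _ => (hD t).2)
      have hwe : -(W : ℤ) ≤ w (ρ 0, ρ 1) := by
        rw [hedge]
        exact neg_le_of_abs_le (hw e he)
      rw [hsplit]
      have hW0 : (0 : ℤ) ≤ (W : ℤ) := Int.natCast_nonneg W
      nlinarith [hpb]

end Path

end QaSTelPaper

open QaSTelPaper in
/-- for every edge, either `optE(e) ≤ |V|·W` or `optE(e) = ∞`. -/
theorem statement4 {V : Type*} [Fintype V]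
    (V0 : Set V) (E : Set (V × V)) (hE : ∀ v : V, ∃ v', (v, v') ∈ E)
    (w : V × V → ℤ) (W : ℕ) (hw : ∀ e ∈ E, |w e| ≤ (W : ℤ)) :
    ∀ e ∈ E, optE V0 E w e ≤ ((Fintype.card V * W : ℕ) : ℕ∞) ∨ optE V0 E w e = ⊤ := by
  intro e he
  unfold optE
  rcases eq_or_ne (sInf {m : ℕ∞ | ∀ c : ℕ, m ≤ (c : ℕ∞) →
      ∃ π, IsStrategy V0 E π ∧
        ∀ ρ, IsPlay E ρ → (ρ 0, ρ 1) = e → FollowsStrat V0 π (shift ρ) → ρ ∈ En w c}) ⊤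
      with htop | htop
  · exact Or.inr htop
  · left
    have hex : ∃ m ∈ {m : ℕ∞ | ∀ c : ℕ, m ≤ (c : ℕ∞) →
        ∃ π, IsStrategy V0 E π ∧
          ∀ ρ, IsPlay E ρ → (ρ 0, ρ 1) = e → FollowsStrat V0 π (shift ρ) → ρ ∈ En w c},
        m ≠ ⊤ := by
      by_contra hcon
      push_neg at hcon
      exact htop (sInf_eq_top.mpr hcon)
    obtain ⟨m, hmS, hmtop⟩ := hex
    obtain ⟨π, hπ, hwin0⟩ := hmS m.toNat (by rw [ENat.coe_toNat hmtop])
    have hwin : ∀ ρ, IsPlay E ρ → (ρ 0, ρ 1) = e → FollowsStrat V0 π (shift ρ) →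
        ∀ i, 0 ≤ (m.toNat : ℤ) + prefW w ρ i := fun ρ h1 h2 h3 => hwin0 ρ h1 h2 h3
    obtain ⟨π', hπ', hbound⟩ := good_strategy V0 E hE w e m.toNat π hπ hwin he W hw
    have hmem : ((Fintype.card V * W : ℕ) : ℕ∞) ∈ {m : ℕ∞ | ∀ c : ℕ, m ≤ (c : ℕ∞) →
        ∃ π, IsStrategy V0 E π ∧
          ∀ ρ, IsPlay E ρ → (ρ 0, ρ 1) = e → FollowsStrat V0 π (shift ρ) → ρ ∈ En w c} := by
      intro c' hc'
      refine ⟨π', hπ', fun ρ h1 h2 h3 => ?_⟩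
      intro i
      have hb := hbound ρ h1 h2 h3 i
      have hcc : ((Fintype.card V * W : ℕ) : ℤ) ≤ (c' : ℤ) := by
        exact_mod_cast (by exact_mod_cast hc' : (Fintype.card V * W : ℕ) ≤ c')
      push_cast at hcc hb ⊢
      linarith
    exact sInf_le hmem
end
end

section
/- Let G = (V,E) be a game graph with weight function w bounded by W, and let Π be the optimal QaSTel. If π is a Player-0 strategy and c ∈ ℕ satisfies c ≥ W·|V| and π ⊨_c Π, then π is winning from every node of Win(G, MP(w)) in the mean-payoff game (G, MP(w)). -/
open scoped Classical

noncomputable section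

namespace Aux8
open QaSTelPaper

variable {V : Type*}

/-! ### Basic play machinery -/

lemma prefW_zero (w : V × V → ℤ) (ρ : ℕ → V) : prefW w ρ 0 = 0 := by
  simp [prefW]

lemma prefW_succ (w : V × V → ℤ) (ρ : ℕ → V) (i : ℕ) :
    prefW w ρ (i + 1) = prefW w ρ i + w (ρ i, ρ (i + 1)) := by
  simp [prefW, Finset.sum_range_succ]

lemma hist_zero (ρ : ℕ → V) : hist ρ 0 = [] := by simp [hist]

lemma hist_succ_cons (ρ : ℕ → V) (j : ℕ) :
    hist ρ (j + 1) = ρ 0 :: hist (shift ρ) j := by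
  simp [hist, List.ofFn_succ, shift]

lemma hist_concat (ρ : ℕ → V) (i : ℕ) :
    hist ρ (i + 1) = hist ρ i ++ [ρ i] := by
  rw [hist, List.ofFn_succ', List.concat_eq_append]; rfl

/-- Prepend a node to a play. -/
def prepC (u : V) (ρ : ℕ → V) : ℕ → V
  | 0 => u
  | n + 1 => ρ n

lemma shift_prepC (u : V) (ρ : ℕ → V) : shift (prepC u ρ) = ρ := by
  funext i; rfl

lemma prepC_zero (u : V) (ρ : ℕ → V) : prepC u ρ 0 = u := rfl

lemma prefW_prepC (w : V × V → ℤ) (u : V) (ρ : ℕ → V) (i : ℕ) :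
    prefW w (prepC u ρ) (i + 1) = w (u, ρ 0) + prefW w ρ i := by
  induction i with
  | zero => simp [prefW_succ, prefW_zero]; rfl
  | succ n ih =>
      rw [prefW_succ, ih, prefW_succ w ρ n]
      have h1 : prepC u ρ (n + 1) = ρ n := rfl
      have h2 : prepC u ρ (n + 1 + 1) = ρ (n + 1) := rfl
      rw [h1, h2]; ring

lemma isPlay_prepC {E : Set (V × V)} {u : V} {ρ : ℕ → V}
    (h0 : (u, ρ 0) ∈ E) (h : IsPlay E ρ) : IsPlay E (prepC u ρ) := by
  intro i; cases i with
  | zero => exact h0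
  | succ n => exact h n

lemma hist_prepC (u : V) (ρ : ℕ → V) (j : ℕ) :
    hist (prepC u ρ) (j + 1) = u :: hist ρ j := by
  rw [hist_succ_cons, shift_prepC]; rfl

/-- If the suffix play follows the `x`-shifted strategy then the play (with `ρ 0 = x`)
follows the original strategy. -/
lemma follows_of_suffix {V0 : Set V} {πe : List V → V → V} {x : V} {ρ' : ℕ → V}
    (h0 : ρ' 0 = x)
    (hshift : FollowsStrat V0 (fun H z => πe (x :: H) z) (shift ρ'))
    (hfirst : ρ' 0 ∈ V0 → ρ' 1 = πe [] (ρ' 0)) :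
    FollowsStrat V0 πe ρ' := by
  intro i hi
  cases i with
  | zero => rw [hist_zero]; exact hfirst hi
  | succ j =>
      have := hshift j hi
      rw [hist_succ_cons, h0]
      exact this

/-- Deterministic extension of a play using a step function that sees the history. -/
def playFrom (f : List V → V → V) (v : V) : ℕ → V
  | 0 => v
  | n + 1 => f (List.ofFn fun j : Fin n => playFrom f v j.1) (playFrom f v n)
  termination_by n => n
  decreasing_by
  · exact j.2.trans (Nat.lt_succ_self n)
  · exact Nat.lt_succ_self n

lemma playFrom_zero (f : List V → V → V) (v : V) : playFrom f v 0 = v := by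
  simp [playFrom]

lemma playFrom_succ (f : List V → V → V) (v : V) (n : ℕ) :
    playFrom f v (n + 1) = f (hist (playFrom f v) n) (playFrom f v n) := by
  rw [playFrom]; rfl

lemma playFrom_isPlay {E : Set (V × V)} {f : List V → V → V}
    (hf : ∀ H u, (u, f H u) ∈ E) (v : V) : IsPlay E (playFrom f v) := by
  intro i; rw [playFrom_succ]; exact hf _ _

lemma playFrom_follows {V0 : Set V} {π : List V → V → V} {f : List V → V → V}
    (hf : ∀ H u, u ∈ V0 → f H u = π H u) (v : V) :
    FollowsStrat V0 π (playFrom f v) := by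
  intro i hi; rw [playFrom_succ, hf _ _ hi]

/-- Default step function: follow `π` at Player-0 nodes, arbitrary edge elsewhere. -/
def stepFn (V0 : Set V) (E : Set (V × V)) (hE : ∀ v : V, ∃ v', (v, v') ∈ E)
    (π : List V → V → V) : List V → V → V :=
  fun H u => if u ∈ V0 then π H u else (hE u).choose

lemma stepFn_edge {V0 : Set V} {E : Set (V × V)} (hE : ∀ v : V, ∃ v', (v, v') ∈ E)
    {π : List V → V → V} (hπ : IsStrategy V0 E π) :
    ∀ H u, (u, stepFn V0 E hE π H u) ∈ E := by
  intro H u; unfold stepFn; split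
  · exact hπ H u ‹_›
  · exact (hE u).choose_spec

end Aux8

namespace Aux8
open QaSTelPaper

variable {V : Type*}

/-! ### optE machinery -/

lemma En_mono {w : V × V → ℤ} {c c' : ℕ} (h : c ≤ c') : En w c ⊆ En w c' := by
  intro ρ hρ i
  have := hρ i
  have : (c : ℤ) ≤ (c' : ℤ) := by exact_mod_cast h
  linarith [hρ i]

/-- The defining set of `optE`. -/
def optSet (V0 : Set V) (E : Set (V × V)) (w : V × V → ℤ) (e : V × V) : Set ℕ∞ :=
  {m : ℕ∞ | ∀ c : ℕ, m ≤ (c : ℕ∞) →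
    ∃ π, IsStrategy V0 E π ∧
      ∀ ρ, IsPlay E ρ → (ρ 0, ρ 1) = e → FollowsStrat V0 π (shift ρ) → ρ ∈ En w c}

lemma optE_eq (V0 : Set V) (E : Set (V × V)) (w : V × V → ℤ) (e : V × V) :
    optE V0 E w e = sInf (optSet V0 E w e) := rfl

lemma optSet_upward {V0 : Set V} {E : Set (V × V)} {w : V × V → ℤ} {e : V × V}
    {m₁ m₂ : ℕ∞} (h : m₁ ∈ optSet V0 E w e) (hle : m₁ ≤ m₂) :
    m₂ ∈ optSet V0 E w e := fun c hc => h c (hle.trans hc)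

lemma optE_le_intro {V0 : Set V} {E : Set (V × V)} {w : V × V → ℤ} {e : V × V}
    (m : ℕ) (h : ∀ c : ℕ, m ≤ c →
      ∃ π, IsStrategy V0 E π ∧
        ∀ ρ, IsPlay E ρ → (ρ 0, ρ 1) = e → FollowsStrat V0 π (shift ρ) → ρ ∈ En w c) :
    optE V0 E w e ≤ (m : ℕ∞) := by
  apply sInf_le
  intro c hc
  exact h c (by exact_mod_cast hc)

lemma optE_elim {V0 : Set V} {E : Set (V × V)} {w : V × V → ℤ} {e : V × V}
    {m : ℕ} (h : optE V0 E w e ≤ (m : ℕ∞)) :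
    ∃ π, IsStrategy V0 E π ∧
      ∀ ρ, IsPlay E ρ → (ρ 0, ρ 1) = e → FollowsStrat V0 π (shift ρ) → ρ ∈ En w m := by
  have hmem : (m : ℕ∞) ∈ optSet V0 E w e := by
    by_contra hnot
    by_cases hex : ∃ s ∈ optSet V0 E w e, s ≤ (m : ℕ∞)
    · obtain ⟨s, hs, hsle⟩ := hex
      exact hnot (optSet_upward hs hsle)
    · push_neg at hex
      have : (m : ℕ∞) + 1 ≤ optE V0 E w e := by
        apply le_sInf
        intro s hs
        exact Order.add_one_le_of_lt (hex s hs)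
      have h2 : (m : ℕ∞) + 1 ≤ (m : ℕ∞) := this.trans h
      have : ((m + 1 : ℕ) : ℕ∞) ≤ ((m : ℕ) : ℕ∞) := by
        simpa [Nat.cast_add] using h2
      have := (Nat.cast_le (α := ℕ∞)).mp this
      omega
  exact hmem m le_rfl

end Aux8

namespace Aux8
open QaSTelPaper

variable {V : Type*} [Inhabited V]

/-! ### Stacks and first-cycle games -/

/-- Weight of a stack (head = current node): sum of `w (lower, upper)` over adjacent pairs. -/
def stackW (w : V × V → ℤ) : List V → ℤ
  | a :: b :: t => w (b, a) + stackW w (b :: t)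
  | _ => 0

/-- Adjacent stack entries are edges (from lower to upper). -/
def StkPath (E : Set (V × V)) : List V → Prop
  | a :: b :: t => (b, a) ∈ E ∧ StkPath E (b :: t)
  | _ => True

/-- The part of the stack from the top down to (and including) the first occurrence of `x`. -/
def segTo (x : V) : List V → List V
  | [] => [x]
  | a :: t => if a = x then [x] else a :: segTo x t

/-- Pop the stack down to the first occurrence of `x` (keeping `x`). -/
def popTo (x : V) : List V → List V
  | [] => []
  | a :: t => if a = x then a :: t else popTo x t

/-- Stack update: pop when revisiting a node, push otherwise. -/
def updS (s : List V) (x : V) : List V :=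
  if x ∈ s then popTo x s else x :: s

/-- Weight of a cycle closed by moving from the stack top to `x ∈ s`. -/
def cycW (w : V × V → ℤ) (s : List V) (x : V) : ℤ :=
  w (s.headI, x) + stackW w (segTo x s)

/-- Player 0 wins the first-cycle game from stack position `s` with given fuel. -/
def GoodF (V0 : Set V) (E : Set (V × V)) (w : V × V → ℤ) : ℕ → List V → Prop
  | 0, _ => True
  | n + 1, s =>
    if s.headI ∈ V0 then
      ∃ v', (s.headI, v') ∈ E ∧
        (if v' ∈ s then 0 ≤ cycW w s v' else GoodF V0 E w n (v' :: s))
    else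
      ∀ v', (s.headI, v') ∈ E →
        (if v' ∈ s then 0 ≤ cycW w s v' else GoodF V0 E w n (v' :: s))

/-- Player 1 wins the first-cycle game from stack position `s` with given fuel. -/
def BadF (V0 : Set V) (E : Set (V × V)) (w : V × V → ℤ) : ℕ → List V → Prop
  | 0, _ => True
  | n + 1, s =>
    if s.headI ∈ V0 then
      ∀ v', (s.headI, v') ∈ E →
        (if v' ∈ s then cycW w s v' < 0 else BadF V0 E w n (v' :: s))
    else
      ∃ v', (s.headI, v') ∈ E ∧
        (if v' ∈ s then cycW w s v' < 0 else BadF V0 E w n (v' :: s))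

variable {V0 : Set V} {E : Set (V × V)} {w : V × V → ℤ}

/-- Determinacy of the first-cycle game. -/
lemma FCG_determined [Fintype V] (hE : ∀ v : V, ∃ v', (v, v') ∈ E) :
    ∀ (n : ℕ) (s : List V), s ≠ [] → s.Nodup →
      s.length + n = Fintype.card V + 1 →
      GoodF V0 E w n s ∨ BadF V0 E w n s := by
  intro n
  induction n with
  | zero =>
      intro s hne hnd hlen
      have := hnd.length_le_card
      omega
  | succ n ih =>
      intro s hne hnd hlen
      by_cases h0 : s.headI ∈ V0
      · by_cases hex : ∃ v', (s.headI, v') ∈ E ∧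
            (if v' ∈ s then 0 ≤ cycW w s v' else GoodF V0 E w n (v' :: s))
        · left; rw [GoodF]; rw [if_pos h0]; exact hex
        · right; rw [BadF, if_pos h0]
          push_neg at hex
          intro v' hv'
          have hng := hex v' hv'
          by_cases hm : v' ∈ s
          · rw [if_pos hm] at hng ⊢; linarith [lt_of_not_ge hng]
          · rw [if_neg hm] at hng ⊢
            rcases ih (v' :: s) (by simp) (by simp [hnd, hm]) (by simp; omega) with h | h
            · exact absurd h hng
            · exact h
      · by_cases hex : ∃ v', (s.headI, v') ∈ E ∧
            (if v' ∈ s then cycW w s v' < 0 else BadF V0 E w n (v' :: s))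
        · right; rw [BadF, if_neg h0]; exact hex
        · left; rw [GoodF, if_neg h0]
          push_neg at hex
          intro v' hv'
          have hng := hex v' hv'
          by_cases hm : v' ∈ s
          · rw [if_pos hm] at hng ⊢; linarith [le_of_not_gt hng]
          · rw [if_neg hm] at hng ⊢
            rcases ih (v' :: s) (by simp) (by simp [hnd, hm]) (by simp; omega) with h | h
            · exact h
            · exact absurd h hng
end Aux8

namespace Aux8
open QaSTelPaper

variable {V : Type*} [Inhabited V]
variable {V0 : Set V} {E : Set (V × V)} {w : V × V → ℤ}

lemma stackW_nil : stackW w ([] : List V) = 0 := rfl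
lemma stackW_single (a : V) : stackW w [a] = 0 := rfl
lemma stackW_cons₂ (a b : V) (t : List V) :
    stackW w (a :: b :: t) = w (b, a) + stackW w (b :: t) := rfl

lemma stackW_cons {s : List V} (hs : s ≠ []) (x : V) :
    stackW w (x :: s) = w (s.headI, x) + stackW w s := by
  cases s with
  | nil => exact absurd rfl hs
  | cons b t => rfl

lemma segTo_ne_nil (x : V) (s : List V) : segTo x s ≠ [] := by
  cases s with
  | nil => simp [segTo]
  | cons a t => simp only [segTo]; split <;> simp

lemma headI_segTo {x : V} {s : List V} (hs : s ≠ []) :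
    (segTo x s).headI = s.headI := by
  cases s with
  | nil => exact absurd rfl hs
  | cons a t =>
      simp only [segTo]
      split
      · simp [*, List.headI]
      · rfl

lemma popTo_eq_cons {x : V} {s : List V} (hx : x ∈ s) :
    ∃ t, popTo x s = x :: t := by
  induction s with
  | nil => simp at hx
  | cons a t ih =>
      by_cases hax : a = x
      · exact ⟨t, by simp [popTo, hax]⟩
      · have hxt : x ∈ t := List.mem_of_ne_of_mem (fun h => hax h.symm) hx
        obtain ⟨t', ht'⟩ := ih hxt
        exact ⟨t', by simp [popTo, hax, ht']⟩

lemma popTo_suffix (x : V) (s : List V) : popTo x s <:+ s := by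
  induction s with
  | nil => simp [popTo]
  | cons a t ih =>
      simp only [popTo]
      split
      · exact List.suffix_rfl
      · exact ih.trans (List.suffix_cons a t)

lemma stackW_decomp {x : V} {s : List V} (hx : x ∈ s) :
    stackW w s = stackW w (segTo x s) + stackW w (popTo x s) := by
  induction s with
  | nil => simp at hx
  | cons a t ih =>
      by_cases hax : a = x
      · simp [segTo, popTo, hax, stackW_single]
      · have hxt : x ∈ t := List.mem_of_ne_of_mem (fun h => hax h.symm) hx
        have htne : t ≠ [] := by rintro rfl; simp at hxt
        simp only [segTo, popTo, if_neg hax]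
        have h1 : stackW w (a :: segTo x t) = w (t.headI, a) + stackW w (segTo x t) := by
          rw [stackW_cons (segTo_ne_nil x t), headI_segTo htne]
        have h2 : stackW w (a :: t) = w (t.headI, a) + stackW w t := stackW_cons htne a
        rw [h1, h2, ih hxt]; ring

lemma length_decomp {x : V} {s : List V} (hx : x ∈ s) :
    s.length + 1 = (segTo x s).length + (popTo x s).length := by
  induction s with
  | nil => simp at hx
  | cons a t ih =>
      by_cases hax : a = x
      · simp [segTo, popTo, hax]; omega
      · have hxt : x ∈ t := List.mem_of_ne_of_mem (fun h => hax h.symm) hx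
        simp only [segTo, popTo, if_neg hax, List.length_cons]
        have := ih hxt
        omega

lemma StkPath_suffix {s t : List V} (h : t <:+ s) (hp : StkPath E s) : StkPath E t := by
  obtain ⟨u, rfl⟩ := h
  induction u with
  | nil => exact hp
  | cons a u ih =>
      apply ih
      cases hu : u ++ t with
      | nil => trivial
      | cons b r => rw [List.cons_append, hu] at hp; exact hp.2

lemma StkPath_cons {s : List V} (hs : s ≠ []) {x : V} (he : (s.headI, x) ∈ E)
    (hp : StkPath E s) : StkPath E (x :: s) := by
  cases s with
  | nil => exact absurd rfl hs
  | cons b t => exact ⟨he, hp⟩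

lemma stackW_abs_le {W : ℕ} (hw : ∀ e ∈ E, |w e| ≤ (W : ℤ)) :
    ∀ {s : List V}, StkPath E s → |stackW w s| ≤ ((s.length - 1 : ℕ) : ℤ) * W := by
  intro s
  induction s with
  | nil => intro _; simp [stackW_nil]
  | cons a t ih =>
      intro hp
      cases t with
      | nil => simp [stackW_single]
      | cons b r =>
          have h1 := hw _ hp.1
          have h2 := ih hp.2
          rw [stackW_cons₂]
          simp only [List.length_cons, Nat.add_sub_cancel] at h2 ⊢
          have h3 : |w (b, a) + stackW w (b :: r)| ≤ |w (b, a)| + |stackW w (b :: r)| :=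
            abs_add_le _ _
          push_cast
          push_cast at h2
          linarith

/-- popped stack weight vs cycle weight. -/
lemma stackW_popTo {x : V} {s : List V} (hx : x ∈ s) :
    stackW w (popTo x s) = stackW w s + w (s.headI, x) - cycW w s x := by
  have := stackW_decomp (w := w) hx
  unfold cycW
  linarith

lemma updS_headI {s : List V} (x : V) : (updS s x).headI = x := by
  unfold updS
  split
  · obtain ⟨t, ht⟩ := popTo_eq_cons ‹x ∈ s›; rw [ht]; rfl
  · rfl

lemma updS_ne_nil {s : List V} (x : V) : updS s x ≠ [] := by
  unfold updS
  split
  · obtain ⟨t, ht⟩ := popTo_eq_cons ‹x ∈ s›; rw [ht]; simp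
  · simp

lemma updS_nodup {s : List V} (hnd : s.Nodup) (x : V) : (updS s x).Nodup := by
  unfold updS
  split
  · exact hnd.sublist (popTo_suffix x s).sublist
  · exact List.nodup_cons.mpr ⟨‹x ∉ s›, hnd⟩

lemma updS_stkPath {s : List V} (hs : s ≠ []) (hp : StkPath E s) {x : V}
    (he : (s.headI, x) ∈ E) : StkPath E (updS s x) := by
  unfold updS
  split
  · exact StkPath_suffix (popTo_suffix x s) hp
  · exact StkPath_cons hs he hp

end Aux8

namespace Aux8
open QaSTelPaper

variable {V : Type*} [Inhabited V]
variable {V0 : Set V} {E : Set (V × V)} {w : V × V → ℤ}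

/-- Stack associated to a history. -/
def stkOf : List V → List V := fun H => H.foldl updS []

lemma stkOf_concat (H : List V) (z : V) : stkOf (H ++ [z]) = updS (stkOf H) z :=
  List.foldl_concat _ _ _ _

/-- Player 0's move in the first-cycle game at stack `s`. -/
def gMove (V0 : Set V) (E : Set (V × V)) (w : V × V → ℤ)
    (hE : ∀ v : V, ∃ v', (v, v') ∈ E) (N : ℕ) (s : List V) : V :=
  if h : ∃ v', (s.headI, v') ∈ E ∧
      (if v' ∈ s then 0 ≤ cycW w s v' else GoodF V0 E w (N - s.length) (v' :: s)) then
    h.choose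
  else (hE s.headI).choose

lemma gMove_edge (hE : ∀ v : V, ∃ v', (v, v') ∈ E) (N : ℕ) (s : List V) :
    (s.headI, gMove V0 E w hE N s) ∈ E := by
  unfold gMove
  split
  · rename_i h; exact h.choose_spec.1
  · exact (hE s.headI).choose_spec

lemma gMove_spec (hE : ∀ v : V, ∃ v', (v, v') ∈ E) {N : ℕ} {s : List V}
    (hlen : s.length ≤ N) (h0 : s.headI ∈ V0)
    (hG : GoodF V0 E w (N + 1 - s.length) s) :
    (if gMove V0 E w hE N s ∈ s then 0 ≤ cycW w s (gMove V0 E w hE N s)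
      else GoodF V0 E w (N - s.length) (gMove V0 E w hE N s :: s)) := by
  have hfuel : N + 1 - s.length = (N - s.length) + 1 := by omega
  rw [hfuel] at hG
  rw [GoodF, if_pos h0] at hG
  unfold gMove
  split
  · rename_i h; exact h.choose_spec.2
  · exact absurd hG ‹_›

/-- The reset strategy for Player 0. -/
def tauStrat (V0 : Set V) (E : Set (V × V)) (w : V × V → ℤ)
    (hE : ∀ v : V, ∃ v', (v, v') ∈ E) (N : ℕ) : List V → V → V :=
  fun H z => gMove V0 E w hE N (updS (stkOf H) z)

lemma tauStrat_isStrategy (hE : ∀ v : V, ∃ v', (v, v') ∈ E) (N : ℕ) :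
    IsStrategy V0 E (tauStrat V0 E w hE N) := by
  intro H z _
  have h := gMove_edge (V0 := V0) (w := w) hE N (updS (stkOf H) z)
  rwa [updS_headI] at h

/-- Main lemma for Player 0: from a Good node, the reset strategy keeps the
energy level above `-N·W`. -/
lemma lemA [Fintype V] {W : ℕ} (hE : ∀ v : V, ∃ v', (v, v') ∈ E)
    (hw : ∀ e ∈ E, |w e| ≤ (W : ℤ)) {v : V}
    (hG : GoodF V0 E w (Fintype.card V) [v]) :
    ∀ ρ, IsPlay E ρ → FollowsStrat V0 (tauStrat V0 E w hE (Fintype.card V)) ρ → ρ 0 = v →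
      ∀ i, -((Fintype.card V : ℤ) * W) ≤ prefW w ρ i := by
  intro ρ hplay hfol h0 i
  set N := Fintype.card V with hN
  set S : ℕ → List V := fun i => stkOf (hist ρ (i + 1)) with hS
  have hS0 : S 0 = [ρ 0] := by
    simp [hS, stkOf, hist_concat ρ 0, hist_zero, updS]
  have hSsucc : ∀ j, S (j + 1) = updS (S j) (ρ (j + 1)) := by
    intro j
    rw [hS]
    simp only
    rw [hist_concat ρ (j + 1), stkOf_concat]
  have key : ∀ j, (S j ≠ [] ∧ (S j).headI = ρ j ∧ (S j).Nodup ∧ StkPath E (S j)) ∧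
      (∀ t, t ≠ [] → t <:+ S j → GoodF V0 E w (N + 1 - t.length) t) ∧
      stackW w (S j) ≤ prefW w ρ j := by
    intro j
    induction j with
    | zero =>
        refine ⟨⟨by simp [hS0], by simp [hS0], by simp [hS0], by simp [hS0, StkPath]⟩, ?_, ?_⟩
        · intro t htne hsuf
          rw [hS0] at hsuf
          rcases List.suffix_cons_iff.mp hsuf with rfl | h
          · simpa [h0] using hG
          · simp at h; exact absurd h htne
        · simp [hS0, stackW_single, prefW_zero]
    | succ j ih =>
        obtain ⟨⟨hne, hhd, hnd, hpath⟩, hsuf, hwt⟩ := ih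
        have hlen : (S j).length ≤ N := hnd.length_le_card
        have hedge : (ρ j, ρ (j + 1)) ∈ E := hplay j
        have hedge' : ((S j).headI, ρ (j + 1)) ∈ E := by rw [hhd]; exact hedge
        have hGs : GoodF V0 E w (N + 1 - (S j).length) (S j) := hsuf _ hne List.suffix_rfl
        have hOut : (if ρ (j + 1) ∈ S j then 0 ≤ cycW w (S j) (ρ (j + 1))
            else GoodF V0 E w (N - (S j).length) (ρ (j + 1) :: S j)) := by
          by_cases hc : ρ j ∈ V0
          · have hx : ρ (j + 1) = gMove V0 E w hE N (S j) := by
              have := hfol j hc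
              rw [this]
              unfold tauStrat
              congr 1
              rw [← stkOf_concat, ← hist_concat]
            rw [hx]
            exact gMove_spec hE hlen (by rw [hhd]; exact hc) hGs
          · have hfuel : N + 1 - (S j).length = (N - (S j).length) + 1 := by omega
            rw [hfuel, GoodF, if_neg (by rw [hhd]; exact hc)] at hGs
            exact hGs _ hedge'
        rw [hSsucc j]
        by_cases hmem : ρ (j + 1) ∈ S j
        · -- pop
          have hupd : updS (S j) (ρ (j + 1)) = popTo (ρ (j + 1)) (S j) := if_pos hmem
          rw [if_pos hmem] at hOut
          refine ⟨⟨updS_ne_nil _, updS_headI _, updS_nodup hnd _, updS_stkPath hne hpath hedge'⟩,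
            ?_, ?_⟩
          · intro t htne hsufx
            apply hsuf t htne
            rw [hupd] at hsufx
            exact hsufx.trans (popTo_suffix _ _)
          · rw [hupd, stackW_popTo hmem, hhd, prefW_succ]
            linarith
        · -- push
          have hupd : updS (S j) (ρ (j + 1)) = ρ (j + 1) :: S j := if_neg hmem
          rw [if_neg hmem] at hOut
          refine ⟨⟨updS_ne_nil _, updS_headI _, updS_nodup hnd _, updS_stkPath hne hpath hedge'⟩,
            ?_, ?_⟩
          · intro t htne hsufx
            rw [hupd] at hsufx
            rcases List.suffix_cons_iff.mp hsufx with rfl | h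
            · have : N + 1 - (ρ (j + 1) :: S j).length = N - (S j).length := by
                simp only [List.length_cons]; omega
              rw [this]
              exact hOut
            · exact hsuf t htne h
          · rw [hupd, stackW_cons hne, hhd, prefW_succ]
            linarith
  obtain ⟨⟨hne, _, hnd, hpath⟩, _, hwt⟩ := key i
  have habs := stackW_abs_le hw hpath
  have hlen : (S i).length ≤ N := hnd.length_le_card
  have h1 : (((S i).length - 1 : ℕ) : ℤ) * W ≤ (N : ℤ) * W := by
    apply mul_le_mul_of_nonneg_right _ (by positivity)
    exact_mod_cast Nat.sub_le_of_le_add (by omega)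
  have := neg_abs_le (stackW w (S i))
  linarith
end Aux8

namespace Aux8
open QaSTelPaper

variable {V : Type*} [Inhabited V]
variable {V0 : Set V} {E : Set (V × V)} {w : V × V → ℤ}

/-- Player 1's move in the first-cycle game at stack `s`. -/
def bMove (V0 : Set V) (E : Set (V × V)) (w : V × V → ℤ)
    (hE : ∀ v : V, ∃ v', (v, v') ∈ E) (N : ℕ) (s : List V) : V :=
  if h : ∃ v', (s.headI, v') ∈ E ∧
      (if v' ∈ s then cycW w s v' < 0 else BadF V0 E w (N - s.length) (v' :: s)) then
    h.choose
  else (hE s.headI).choose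

lemma bMove_edge (hE : ∀ v : V, ∃ v', (v, v') ∈ E) (N : ℕ) (s : List V) :
    (s.headI, bMove V0 E w hE N s) ∈ E := by
  unfold bMove
  split
  · rename_i h; exact h.choose_spec.1
  · exact (hE s.headI).choose_spec

lemma bMove_spec (hE : ∀ v : V, ∃ v', (v, v') ∈ E) {N : ℕ} {s : List V}
    (hlen : s.length ≤ N) (h0 : s.headI ∉ V0)
    (hB : BadF V0 E w (N + 1 - s.length) s) :
    (if bMove V0 E w hE N s ∈ s then cycW w s (bMove V0 E w hE N s) < 0
      else BadF V0 E w (N - s.length) (bMove V0 E w hE N s :: s)) := by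
  have hfuel : N + 1 - s.length = (N - s.length) + 1 := by omega
  rw [hfuel] at hB
  rw [BadF, if_neg h0] at hB
  unfold bMove
  split
  · rename_i h; exact h.choose_spec.2
  · exact absurd hB ‹_›

/-- Player 1's counter-play against strategy `σ`. -/
def badStep (V0 : Set V) (E : Set (V × V)) (w : V × V → ℤ)
    (hE : ∀ v : V, ∃ v', (v, v') ∈ E) (N : ℕ) (σ : List V → V → V) :
    List V → V → V :=
  fun H z => if z ∈ V0 then σ H z else bMove V0 E w hE N (updS (stkOf H) z)

/-- Main lemma for Player 1: from a Bad node, against any strategy `σ` there is a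
play whose prefix weights decrease linearly. -/
lemma lemB [Fintype V] {W : ℕ} (hE : ∀ v : V, ∃ v', (v, v') ∈ E)
    (hw : ∀ e ∈ E, |w e| ≤ (W : ℤ)) {v : V}
    (hB : BadF V0 E w (Fintype.card V) [v]) (σ : List V → V → V)
    (hσ : IsStrategy V0 E σ) :
    ∃ ρ, IsPlay E ρ ∧ FollowsStrat V0 σ ρ ∧ ρ 0 = v ∧
      ∀ i : ℕ, (Fintype.card V : ℤ) * prefW w ρ i ≤
        (Fintype.card V : ℤ) * (Fintype.card V : ℤ) * W + Fintype.card V - i := by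
  set N := Fintype.card V with hN
  set ρ : ℕ → V := playFrom (badStep V0 E w hE N σ) v with hρ
  have hplay : IsPlay E ρ := by
    apply playFrom_isPlay
    intro H z
    unfold badStep
    split
    · exact hσ H z ‹_›
    · have h := bMove_edge (V0 := V0) (w := w) hE N (updS (stkOf H) z)
      rwa [updS_headI] at h
  have hfol : FollowsStrat V0 σ ρ := by
    apply playFrom_follows
    intro H z hz
    unfold badStep
    rw [if_pos hz]
  have h0 : ρ 0 = v := playFrom_zero _ _
  refine ⟨ρ, hplay, hfol, h0, ?_⟩
  set S : ℕ → List V := fun i => stkOf (hist ρ (i + 1)) with hS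
  have hS0 : S 0 = [ρ 0] := by
    simp [hS, stkOf, hist_concat ρ 0, hist_zero, updS]
  have hSsucc : ∀ j, S (j + 1) = updS (S j) (ρ (j + 1)) := by
    intro j
    rw [hS]
    simp only
    rw [hist_concat ρ (j + 1), stkOf_concat]
  have key : ∀ j, (S j ≠ [] ∧ (S j).headI = ρ j ∧ (S j).Nodup ∧ StkPath E (S j)) ∧
      (∀ t, t ≠ [] → t <:+ S j → BadF V0 E w (N + 1 - t.length) t) ∧
      ∃ p : ℕ, prefW w ρ j ≤ stackW w (S j) - p ∧ (j : ℤ) ≤ (S j).length - 1 + N * p := by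
    intro j
    induction j with
    | zero =>
        refine ⟨⟨by simp [hS0], by simp [hS0], by simp [hS0], by simp [hS0, StkPath]⟩, ?_,
          ⟨0, ?_, ?_⟩⟩
        · intro t htne hsuf
          rw [hS0] at hsuf
          rcases List.suffix_cons_iff.mp hsuf with rfl | h
          · simpa [h0] using hB
          · simp at h; exact absurd h htne
        · simp [hS0, stackW_single, prefW_zero]
        · simp [hS0]
    | succ j ih =>
        obtain ⟨⟨hne, hhd, hnd, hpath⟩, hsuf, p, hwt, hcnt⟩ := ih
        have hlen : (S j).length ≤ N := hnd.length_le_card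
        have hedge : (ρ j, ρ (j + 1)) ∈ E := hplay j
        have hedge' : ((S j).headI, ρ (j + 1)) ∈ E := by rw [hhd]; exact hedge
        have hBs : BadF V0 E w (N + 1 - (S j).length) (S j) := hsuf _ hne List.suffix_rfl
        have hOut : (if ρ (j + 1) ∈ S j then cycW w (S j) (ρ (j + 1)) < 0
            else BadF V0 E w (N - (S j).length) (ρ (j + 1) :: S j)) := by
          by_cases hc : ρ j ∈ V0
          · have hfuel : N + 1 - (S j).length = (N - (S j).length) + 1 := by omega
            rw [hfuel, BadF, if_pos (by rw [hhd]; exact hc)] at hBs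
            exact hBs _ hedge'
          · have hx : ρ (j + 1) = bMove V0 E w hE N (S j) := by
              have hstep : ρ (j + 1) = badStep V0 E w hE N σ (hist ρ j) (ρ j) := by
                rw [hρ]; exact playFrom_succ _ _ j
              rw [hstep]
              unfold badStep
              rw [if_neg hc]
              congr 1
              rw [← stkOf_concat, ← hist_concat]
            rw [hx]
            exact bMove_spec hE hlen (by rw [hhd]; exact hc) hBs
        rw [hSsucc j]
        by_cases hmem : ρ (j + 1) ∈ S j
        · -- pop
          have hupd : updS (S j) (ρ (j + 1)) = popTo (ρ (j + 1)) (S j) := if_pos hmem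
          rw [if_pos hmem] at hOut
          refine ⟨⟨updS_ne_nil _, updS_headI _, updS_nodup hnd _, updS_stkPath hne hpath hedge'⟩,
            ?_, ⟨p + 1, ?_, ?_⟩⟩
          · intro t htne hsufx
            apply hsuf t htne
            rw [hupd] at hsufx
            exact hsufx.trans (popTo_suffix _ _)
          · rw [hupd, stackW_popTo hmem, hhd, prefW_succ]
            push_cast
            linarith
          · obtain ⟨t', ht'⟩ := popTo_eq_cons hmem
            have hdec := length_decomp (x := ρ (j + 1)) hmem
            have hseg : 1 ≤ (segTo (ρ (j + 1)) (S j)).length := by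
              cases hsg : segTo (ρ (j+1)) (S j) with
              | nil => exact absurd hsg (segTo_ne_nil _ _)
              | cons a t => simp
            have hpop1 : 1 ≤ (popTo (ρ (j + 1)) (S j)).length := by rw [ht']; simp
            have hkey : ((S j).length : ℤ) + 1 ≤ (popTo (ρ (j + 1)) (S j)).length + N := by
              have : (segTo (ρ (j+1)) (S j)).length ≤ (S j).length := by omega
              push_cast
              omega
            rw [hupd]
            push_cast
            push_cast at hcnt
            linarith
        · -- push
          have hupd : updS (S j) (ρ (j + 1)) = ρ (j + 1) :: S j := if_neg hmem
          rw [if_neg hmem] at hOut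
          refine ⟨⟨updS_ne_nil _, updS_headI _, updS_nodup hnd _, updS_stkPath hne hpath hedge'⟩,
            ?_, ⟨p, ?_, ?_⟩⟩
          · intro t htne hsufx
            rw [hupd] at hsufx
            rcases List.suffix_cons_iff.mp hsufx with rfl | h
            · have : N + 1 - (ρ (j + 1) :: S j).length = N - (S j).length := by
                simp only [List.length_cons]; omega
              rw [this]
              exact hOut
            · exact hsuf t htne h
          · rw [hupd, stackW_cons hne, hhd, prefW_succ]
            linarith
          · rw [hupd]
            simp only [List.length_cons]
            push_cast
            push_cast at hcnt
            linarith
  intro i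
  obtain ⟨⟨hne, _, hnd, hpath⟩, _, p, hwt, hcnt⟩ := key i
  have habs := stackW_abs_le hw hpath
  have hlen : (S i).length ≤ N := hnd.length_le_card
  have h1 : stackW w (S i) ≤ (((S i).length - 1 : ℕ) : ℤ) * W := le_of_abs_le habs
  have h2 : (((S i).length - 1 : ℕ) : ℤ) * W ≤ (N : ℤ) * W := by
    apply mul_le_mul_of_nonneg_right _ (by positivity)
    exact_mod_cast Nat.sub_le_of_le_add (by omega)
  have hstack : stackW w (S i) ≤ (N : ℤ) * W := h1.trans h2
  have hNpos : (0 : ℤ) ≤ N := by positivity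
  have hmul := mul_le_mul_of_nonneg_left hwt hNpos
  have hmul2 := mul_le_mul_of_nonneg_left hstack hNpos
  -- N * prefW ≤ N * stackW - N * p ≤ N*N*W - (i - (len - 1)) ≤ N*N*W + N - i
  have hlen1 : 1 ≤ (S i).length := by
    cases hs : S i with
    | nil => exact absurd hs hne
    | cons a t => simp
  have hlenZ : ((S i).length : ℤ) - 1 ≤ (N : ℤ) - 1 := by
    have : ((S i).length : ℤ) ≤ N := by exact_mod_cast hlen
    linarith
  nlinarith [hmul, hmul2, hcnt, hlenZ]
end Aux8

namespace Aux8
open QaSTelPaper Filter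

variable {V : Type*}

lemma mem_MP_of_ge {w : V × V → ℤ} {ρ : ℕ → V} (c : ℕ)
    (h : ∀ i, -(c : ℤ) ≤ prefW w ρ i) : ρ ∈ MP w := by
  unfold MP
  simp only [Set.mem_setOf_eq]
  set f : ℕ → EReal := fun n : ℕ => ((prefW w ρ n : ℝ) / (n : ℝ) : EReal) with hf
  set g : ℕ → EReal := fun n : ℕ => (((-(c : ℝ)) / (n : ℝ) : ℝ) : EReal) with hg
  have h1 : Tendsto g atTop (nhds (((0 : ℝ) : EReal))) :=
    (continuous_coe_real_ereal.tendsto _).comp (tendsto_const_div_atTop_nhds_zero_nat (-(c : ℝ)))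
  have h2 : liminf g atTop = ((0 : ℝ) : EReal) := h1.liminf_eq
  have h3 : ∀ᶠ n : ℕ in atTop, g n ≤ f n := by
    filter_upwards [eventually_ge_atTop 1] with n hn
    rw [hf, hg]
    simp only [← EReal.coe_div]
    rw [EReal.coe_le_coe_iff]
    have hn' : (0 : ℝ) < n := by exact_mod_cast hn
    gcongr
    exact_mod_cast h n
  calc (0 : EReal) = ((0 : ℝ) : EReal) := by norm_num
    _ = liminf g atTop := h2.symm
    _ ≤ liminf f atTop := liminf_le_liminf h3
    _ ≤ limsup f atTop := liminf_le_limsup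

lemma not_MP_of_linear {w : V × V → ℤ} {ρ : ℕ → V} {N : ℕ} (hN : 0 < N) (C : ℤ)
    (h : ∀ i : ℕ, (N : ℤ) * prefW w ρ i ≤ C - i) : ρ ∉ MP w := by
  intro hmp
  unfold MP at hmp
  simp only [Set.mem_setOf_eq] at hmp
  set f : ℕ → EReal := fun n : ℕ => ((prefW w ρ n : ℝ) / (n : ℝ) : EReal) with hf
  set g : ℕ → ℝ := fun n : ℕ => ((C : ℝ) / n - 1) / N with hg
  have hNr : (0 : ℝ) < N := by exact_mod_cast hN
  have hgt : Tendsto g atTop (nhds ((0 - 1) / N)) :=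
    ((tendsto_const_div_atTop_nhds_zero_nat (C : ℝ)).sub_const 1).div_const N
  have hgE : Tendsto (fun n : ℕ => ((g n : ℝ) : EReal)) atTop
      (nhds (((0 - 1) / N : ℝ) : EReal)) :=
    (continuous_coe_real_ereal.tendsto _).comp hgt
  have hlim : limsup (fun n : ℕ => ((g n : ℝ) : EReal)) atTop = (((0 - 1) / N : ℝ) : EReal) :=
    hgE.limsup_eq
  have h3 : ∀ᶠ n : ℕ in atTop, f n ≤ ((g n : ℝ) : EReal) := by
    filter_upwards [eventually_ge_atTop 1] with n hn
    rw [hf, hg]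
    simp only [← EReal.coe_div]
    rw [EReal.coe_le_coe_iff]
    have hn' : (0 : ℝ) < n := by exact_mod_cast hn
    have hIneq : (prefW w ρ n : ℝ) * N ≤ (C : ℝ) - n := by
      have h' : (N : ℤ) * prefW w ρ n ≤ C - (n : ℤ) := h n
      have h'' : ((N : ℕ) : ℝ) * ((prefW w ρ n : ℤ) : ℝ) ≤ ((C : ℤ) : ℝ) - ((n : ℕ) : ℝ) := by
        exact_mod_cast h'
      linarith
    have heq : ((C : ℝ) / n - 1) / N = ((C : ℝ) - n) / (N * n) := by
      field_simp
    rw [heq, div_le_div_iff₀ hn' (by positivity)]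
    nlinarith
  have h4 : limsup f atTop ≤ (((0 - 1) / N : ℝ) : EReal) :=
    le_trans (limsup_le_limsup h3) (le_of_eq hlim)
  have h5 : (0 : EReal) ≤ (((0 - 1) / N : ℝ) : EReal) := le_trans hmp h4
  rw [← EReal.coe_zero, EReal.coe_le_coe_iff] at h5
  have : (0 - 1 : ℝ) / N < 0 := by
    apply div_neg_of_neg_of_pos _ hNr
    norm_num
  linarith
end Aux8

namespace Aux8
open QaSTelPaper

variable {V : Type*}
variable {V0 : Set V} {E : Set (V × V)} {w : V × V → ℤ}

/-- From a mean-payoff winning node `v ∉ V0`, every outgoing edge has a bounded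
edge-optimal value. -/
lemma heavy [Fintype V] (hE : ∀ v : V, ∃ v', (v, v') ∈ E) {W : ℕ}
    (hw : ∀ e ∈ E, |w e| ≤ (W : ℤ)) {v : V}
    (hWin : v ∈ Win V0 E (MP w)) (hv1 : v ∉ V0) {y : V} (hy : (v, y) ∈ E) :
    optE V0 E w (v, y) ≤ ((W * Fintype.card V : ℕ) : ℕ∞) := by
  letI : Inhabited V := ⟨v⟩
  have hNpos : 0 < Fintype.card V := Fintype.card_pos_iff.mpr ⟨v⟩
  rcases FCG_determined (V0 := V0) (E := E) (w := w) hE (Fintype.card V) [v] (by simp)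
      (by simp) (by simp; omega) with hG | hB
  · -- Player 0 wins the first-cycle game: bounded energy strategy
    apply optE_le_intro
    intro c₂ hc₂
    refine ⟨fun H z => tauStrat V0 E w hE (Fintype.card V) (v :: H) z,
      fun H z hz => tauStrat_isStrategy hE (Fintype.card V) (v :: H) z hz, ?_⟩
    intro ρ hplay hpair hshift
    have h0 : ρ 0 = v := congrArg Prod.fst hpair
    have hfolτ : FollowsStrat V0 (tauStrat V0 E w hE (Fintype.card V)) ρ := by
      apply follows_of_suffix h0 hshift
      intro hmem
      rw [h0] at hmem
      exact absurd hmem hv1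
    have hbd := lemA hE hw hG ρ hplay hfolτ h0
    intro i
    have h1 := hbd i
    have h2 : ((W * Fintype.card V : ℕ) : ℤ) ≤ (c₂ : ℤ) := by exact_mod_cast hc₂
    push_cast at h2 ⊢
    linarith
  · -- Player 1 wins the first-cycle game: contradiction with `v ∈ Win (MP w)`
    exfalso
    obtain ⟨σ, hσ, hσwin⟩ := hWin
    obtain ⟨ρ, hplay, hfol, h0, hbound⟩ := lemB hE hw hB σ hσ
    have hMP : ρ ∈ MP w := hσwin ρ hplay hfol h0
    exact not_MP_of_linear hNpos
      ((Fintype.card V : ℤ) * (Fintype.card V : ℤ) * W + Fintype.card V)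
      (fun i => by linarith [hbound i]) hMP

/-- Local consistency of `optE` along an activated edge. -/
lemma consistency (hE : ∀ v : V, ∃ v', (v, v') ∈ E) {u x : V} {m : ℕ}
    (hux : (u, x) ∈ E) (hopt : optE V0 E w (u, x) ≤ (m : ℕ∞)) :
    0 ≤ (m : ℤ) + w (u, x) ∧
    (x ∉ V0 → ∀ y, (x, y) ∈ E →
      optE V0 E w (x, y) ≤ ((((m : ℤ) + w (u, x)).toNat : ℕ) : ℕ∞)) ∧
    (x ∈ V0 → ∃ y, (x, y) ∈ E ∧
      optE V0 E w (x, y) ≤ ((((m : ℤ) + w (u, x)).toNat : ℕ) : ℕ∞)) := by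
  obtain ⟨πe, hπe, hEn⟩ := optE_elim hopt
  have hcred : 0 ≤ (m : ℤ) + w (u, x) := by
    set g : ℕ → V := playFrom (stepFn V0 E hE πe) x with hg
    have hg0 : g 0 = x := playFrom_zero _ _
    set ρ : ℕ → V := prepC u g with hρ
    have hplay : IsPlay E ρ := isPlay_prepC (by rw [hg0]; exact hux)
      (playFrom_isPlay (stepFn_edge hE hπe) x)
    have hpair : (ρ 0, ρ 1) = (u, x) := by
      rw [hρ]; show (u, g 0) = (u, x); rw [hg0]
    have hshift : FollowsStrat V0 πe (shift ρ) := by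
      rw [hρ, shift_prepC]
      exact playFrom_follows (fun H z hz => by simp [stepFn, hz]) x
    have := hEn ρ hplay hpair hshift 1
    have hpw : prefW w ρ 1 = w (u, x) := by
      rw [hρ, prefW_prepC, hg0, prefW_zero, add_zero]
    rw [hpw] at this
    exact this
  have hc2 : ((((m : ℤ) + w (u, x)).toNat : ℕ) : ℤ) = (m : ℤ) + w (u, x) :=
    Int.toNat_of_nonneg hcred
  have main : ∀ y, (x, y) ∈ E → (x ∈ V0 → y = πe [] x) →
      optE V0 E w (x, y) ≤ ((((m : ℤ) + w (u, x)).toNat : ℕ) : ℕ∞) := by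
    intro y hxy hyV0
    apply optE_le_intro
    intro c₂ hcc
    refine ⟨fun H z => πe (x :: H) z, fun H z hz => hπe (x :: H) z hz, ?_⟩
    intro ρ' hplay' hpair' hshift'
    have h0' : ρ' 0 = x := congrArg Prod.fst hpair'
    have h1' : ρ' 1 = y := congrArg Prod.snd hpair'
    have hfol' : FollowsStrat V0 πe ρ' := by
      apply follows_of_suffix h0' hshift'
      intro hmem
      rw [h1', h0', hyV0 (h0' ▸ hmem)]
    have hplay2 : IsPlay E (prepC u ρ') := isPlay_prepC (by rw [h0']; exact hux) hplay'
    have hpair2 : (prepC u ρ' 0, prepC u ρ' 1) = (u, x) := by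
      show (u, ρ' 0) = (u, x); rw [h0']
    have hshift2 : FollowsStrat V0 πe (shift (prepC u ρ')) := by
      rw [shift_prepC]; exact hfol'
    have hEn2 := hEn _ hplay2 hpair2 hshift2
    intro i
    have h2 := hEn2 (i + 1)
    rw [prefW_prepC, h0'] at h2
    have hcc' : ((m : ℤ) + w (u, x)) ≤ (c₂ : ℤ) := by
      rw [← hc2]; exact_mod_cast hcc
    linarith
  exact ⟨hcred,
    fun hx y hxy => main y hxy (fun hmem => absurd hmem hx),
    fun hx => ⟨πe [] x, hπe [] x hx, main _ (hπe [] x hx) (fun _ => rfl)⟩⟩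

end Aux8
open QaSTelPaper in
/-- any strategy following the optimal QaSTel with some credit
`c ≥ W·|V|` is winning from the winning region of the mean-payoff game. -/
theorem statement8 {V : Type*} [Fintype V]
    (V0 : Set V) (E : Set (V × V)) (hE : ∀ v : V, ∃ v', (v, v') ∈ E)
    (w : V × V → ℤ) (W : ℕ) (hw : ∀ e ∈ E, |w e| ≤ (W : ℤ))
    (π : List V → V → V) (hπ : IsStrategy V0 E π)
    (c : ℕ) (hc : W * Fintype.card V ≤ c)
    (hfollow : FollowsTemplate V0 E w π (optTmpl V0 E w) c) :
    ∀ v ∈ Win V0 E (MP w), WinningFrom V0 E π (MP w) v := by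
  intro v hWin ρ hplay hfol h0
  have hTP := hfollow ρ hplay hfol
  have hheavy : ρ 0 ∉ V0 → optE V0 E w (ρ 0, ρ 1) ≤ ((c : ℕ) : ℕ∞) := by
    intro hv1
    have hWin' : ρ 0 ∈ Win V0 E (MP w) := h0 ▸ hWin
    exact (Aux8.heavy hE hw hWin' hv1 (hplay 0)).trans (by exact_mod_cast hc)
  have htmpl : ∀ i, (ρ i, ρ (i + 1)) ∈ tmplZ (optTmpl V0 E w) (ρ i) ((c : ℤ) + prefW w ρ i) →
      optE V0 E w (ρ i, ρ (i + 1)) ≤ ((((c : ℤ) + prefW w ρ i).toNat : ℕ) : ℕ∞) := by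
    intro i hmem
    unfold tmplZ at hmem
    split at hmem
    · exact hmem.2.2
    · exact absurd hmem (Set.notMem_empty _)
  have hstep : ∀ i, 0 ≤ (c : ℤ) + prefW w ρ i →
      optE V0 E w (ρ i, ρ (i + 1)) ≤ ((((c : ℤ) + prefW w ρ i).toNat : ℕ) : ℕ∞) →
      0 ≤ (c : ℤ) + prefW w ρ (i + 1) ∧
      (ρ (i + 1) ∉ V0 → optE V0 E w (ρ (i + 1), ρ (i + 2)) ≤
        ((((c : ℤ) + prefW w ρ (i + 1)).toNat : ℕ) : ℕ∞)) ∧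
      (ρ (i + 1) ∈ V0 → ∃ y, (ρ (i + 1), y) ∈ E ∧ optE V0 E w (ρ (i + 1), y) ≤
        ((((c : ℤ) + prefW w ρ (i + 1)).toNat : ℕ) : ℕ∞)) := by
    intro i hcred hopt
    obtain ⟨h1, h2, h3⟩ := Aux8.consistency hE (hplay i) hopt
    have hm : ((((c : ℤ) + prefW w ρ i).toNat : ℕ) : ℤ) = (c : ℤ) + prefW w ρ i :=
      Int.toNat_of_nonneg hcred
    have heq : ((((c : ℤ) + prefW w ρ i).toNat : ℕ) : ℤ) + w (ρ i, ρ (i + 1)) =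
        (c : ℤ) + prefW w ρ (i + 1) := by
      rw [hm, Aux8.prefW_succ]; ring
    refine ⟨by rw [← heq]; exact h1, ?_, ?_⟩
    · intro hx
      have := h2 hx (ρ (i + 2)) (hplay (i + 1))
      rwa [heq] at this
    · intro hx
      obtain ⟨y, hy, hopt'⟩ := h3 hx
      exact ⟨y, hy, by rwa [heq] at hopt'⟩
  have hbase : (ρ 0 ∈ V0 → (ρ 0, ρ 1) ∈ tmplZ (optTmpl V0 E w) (ρ 0)
        ((c : ℤ) + prefW w ρ 0)) →
      optE V0 E w (ρ 0, ρ 1) ≤ ((((c : ℤ) + prefW w ρ 0).toNat : ℕ) : ℕ∞) := by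
    intro ht
    have hc0 : ((((c : ℤ) + prefW w ρ 0).toNat : ℕ) : ℕ∞) = ((c : ℕ) : ℕ∞) := by
      rw [Aux8.prefW_zero]; simp
    by_cases hv : ρ 0 ∈ V0
    · exact htmpl 0 (ht hv)
    · rw [hc0]; exact hheavy hv
  rcases hTP with ha | ⟨k, hbk, hbV0, hbe⟩
  · have hinv : ∀ i, 0 ≤ (c : ℤ) + prefW w ρ i ∧
        optE V0 E w (ρ i, ρ (i + 1)) ≤ ((((c : ℤ) + prefW w ρ i).toNat : ℕ) : ℕ∞) := by
      intro i
      induction i with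
      | zero =>
          refine ⟨by rw [Aux8.prefW_zero]; positivity, hbase (fun hv => ha 0 hv)⟩
      | succ j ih =>
          obtain ⟨h1, h2⟩ := ih
          obtain ⟨h1', h2', h3'⟩ := hstep j h1 h2
          refine ⟨h1', ?_⟩
          by_cases hx : ρ (j + 1) ∈ V0
          · exact htmpl (j + 1) (ha (j + 1) hx)
          · exact h2' hx
    exact Aux8.mem_MP_of_ge c (fun i => by linarith [(hinv i).1])
  · exfalso
    have hinv : ∀ j, j ≤ k → 0 ≤ (c : ℤ) + prefW w ρ j ∧
        optE V0 E w (ρ j, ρ (j + 1)) ≤ ((((c : ℤ) + prefW w ρ j).toNat : ℕ) : ℕ∞) := by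
      intro j
      induction j with
      | zero =>
          intro _
          exact ⟨by rw [Aux8.prefW_zero]; positivity, hbase (fun hv => hbk 0 (Nat.zero_le k) hv)⟩
      | succ j ih =>
          intro hjk
          obtain ⟨h1, h2⟩ := ih (Nat.le_of_succ_le hjk)
          obtain ⟨h1', h2', h3'⟩ := hstep j h1 h2
          refine ⟨h1', ?_⟩
          by_cases hx : ρ (j + 1) ∈ V0
          · exact htmpl (j + 1) (hbk (j + 1) hjk hx)
          · exact h2' hx
    obtain ⟨h1, h2⟩ := hinv k le_rfl
    obtain ⟨h1', h2', h3'⟩ := hstep k h1 h2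
    obtain ⟨y, hy, hopt⟩ := h3' hbV0
    have hmem : (ρ (k + 1), y) ∈ tmplZ (optTmpl V0 E w) (ρ (k + 1))
        ((c : ℤ) + prefW w ρ (k + 1)) := by
      unfold tmplZ
      rw [if_pos h1']
      exact ⟨hy, rfl, hopt⟩
    rw [hbe] at hmem
    exact Set.notMem_empty _ hmem
end
end

section
/- Let V' be a finite set, E' ⊆ V' × V' a set of directed edges, w' : E' → ℤ a weight function with w'(e) ≥ −W for all e ∈ E' and some W ∈ ℕ, and u ∈ V' a node. Suppose every cycle reachable from u has nonnegative total weight, i.e., every finite walk v0 v1 ⋯ vk with k ≥ 1, (v_i, v_{i+1}) ∈ E' for all i < k, v_k = v0, and v0 reachable from u by an E'-walk, satisfies Σ_{i<k} w'(v_i, v_{i+1}) ≥ 0. Then every finite walk starting at u has total weight at least −2·|V'|·W. -/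
/-!
Strong induction on the length of the walk. A walk with fewer than `|V'|` edges loses at most
`W` per edge. A longer walk visits some node twice; the closed segment between the two visits is
a cycle reachable from `u`, so it has nonnegative weight, and cutting it out leaves a shorter walk
from `u` whose weight is at most that of the original one.
-/

section Walks

variable {V : Type*}

def IsWalk (E : Set (V × V)) (f : ℕ → V) (k : ℕ) : Prop :=
  ∀ i < k, (f i, f (i + 1)) ∈ E

def walkWeight (w : V × V → ℤ) (f : ℕ → V) (k : ℕ) : ℤ :=
  ∑ i ∈ Finset.range k, w (f i, f (i + 1))

def Reachable (E : Set (V × V)) (u v : V) : Prop :=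
  ∃ (g : ℕ → V) (m : ℕ), g 0 = u ∧ IsWalk E g m ∧ g m = v

def eraseSegment (f : ℕ → V) (i d : ℕ) : ℕ → V :=
  fun t => if t < i then f t else f (t + d)

variable {E : Set (V × V)} {w : V × V → ℤ} {f g : ℕ → V}

theorem isWalk_add {m n : ℕ} :
    IsWalk E f (m + n) ↔ IsWalk E f m ∧ IsWalk E (fun t => f (m + t)) n := by
  refine ⟨fun h => ⟨fun t ht => h t (by omega), fun t ht => h (m + t) (by omega)⟩, ?_⟩
  rintro ⟨hm, hn⟩ t ht
  rcases lt_or_ge t m with htm | htm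
  · exact hm t htm
  · obtain ⟨s, rfl⟩ := Nat.exists_eq_add_of_le htm
    exact hn s (by omega)

theorem walkWeight_add (m n : ℕ) :
    walkWeight w f (m + n) = walkWeight w f m + walkWeight w (fun t => f (m + t)) n :=
  Finset.sum_range_add _ m n

theorem walkWeight_congr {k : ℕ} (h : ∀ t ≤ k, f t = g t) : walkWeight w f k = walkWeight w g k :=
  Finset.sum_congr rfl fun t ht => by
    rw [Finset.mem_range] at ht
    rw [h t ht.le, h (t + 1) ht]

theorem isWalk_congr {k : ℕ} (h : ∀ t ≤ k, f t = g t) (hf : IsWalk E f k) : IsWalk E g k :=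
  fun t ht => h t ht.le ▸ h (t + 1) ht ▸ hf t ht

theorem neg_mul_le_walkWeight {W : ℤ} (hw : ∀ e ∈ E, -W ≤ w e) {k : ℕ} (hf : IsWalk E f k) :
    -(k * W) ≤ walkWeight w f k := by
  have := Finset.card_nsmul_le_sum (Finset.range k) (fun t => w (f t, f (t + 1))) (-W)
    fun t ht => hw _ (hf t (Finset.mem_range.mp ht))
  simpa [walkWeight] using this

theorem exists_repeat_of_card_le [Fintype V] (f : ℕ → V) {k : ℕ}
    (hk : Fintype.card V ≤ k) : ∃ i d m, 0 < d ∧ i + d + m = k ∧ f (i + d) = f i := by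
  obtain ⟨a, b, hab, heq⟩ :=
    Fintype.exists_ne_map_eq_of_card_lt (fun t : Fin (k + 1) => f t) (by simpa using hk)
  have key : ∀ a b : Fin (k + 1), a < b → f a = f b →
      ∃ i d m, 0 < d ∧ i + d + m = k ∧ f (i + d) = f i := fun a b hlt heq =>
    ⟨a, b - a, k - b, by omega, by omega, by rw [Nat.add_sub_cancel' (by omega)]; exact heq.symm⟩
  rcases lt_or_gt_of_ne hab with h | h
  · exact key a b h heq
  · exact key b a h heq.symm

theorem eraseSegment_of_le {i d t : ℕ} (hrep : f (i + d) = f i) (ht : t ≤ i) :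
    eraseSegment f i d t = f t := by
  unfold eraseSegment
  split_ifs with h
  · rfl
  · rw [show t = i by omega, hrep]

theorem eraseSegment_add (i d t : ℕ) : eraseSegment f i d (i + t) = f (i + d + t) := by
  rw [eraseSegment, if_neg (by omega)]
  congr 1
  omega

theorem isWalk_eraseSegment {i d m : ℕ} (hrep : f (i + d) = f i) (hf : IsWalk E f (i + d + m)) :
    IsWalk E (eraseSegment f i d) (i + m) := by
  obtain ⟨hfid, hfm⟩ := isWalk_add.mp hf
  refine isWalk_add.mpr ⟨?_, ?_⟩
  · exact isWalk_congr (fun t ht => (eraseSegment_of_le hrep ht).symm)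
      (isWalk_add.mp hfid).1
  · simpa only [eraseSegment_add] using hfm

theorem walkWeight_eraseSegment {i d : ℕ} (hrep : f (i + d) = f i) (m : ℕ) :
    walkWeight w (eraseSegment f i d) (i + m) =
      walkWeight w f i + walkWeight w (fun t => f (i + d + t)) m := by
  rw [walkWeight_add, walkWeight_congr fun t ht => eraseSegment_of_le hrep ht]
  simp only [eraseSegment_add]

theorem neg_card_mul_le_walkWeight [Fintype V] {W : ℕ} (hw : ∀ e ∈ E, -(W : ℤ) ≤ w e) {u : V}
    (hcyc : ∀ (f : ℕ → V) (k : ℕ), 1 ≤ k → IsWalk E f k → f k = f 0 → Reachable E u (f 0) →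
      0 ≤ walkWeight w f k)
    (k : ℕ) (f : ℕ → V) (hf0 : f 0 = u) (hf : IsWalk E f k) :
    -(Fintype.card V * W : ℤ) ≤ walkWeight w f k := by
  induction k using Nat.strong_induction_on generalizing f with
  | _ k ih =>
  by_cases hk : k < Fintype.card V
  · have : (k * W : ℤ) ≤ Fintype.card V * W := by gcongr
    linarith [neg_mul_le_walkWeight hw hf]
  obtain ⟨i, d, m, hd, rfl, hrep⟩ := exists_repeat_of_card_le f (not_lt.mp hk)
  obtain ⟨hprefix, hloop⟩ := isWalk_add.mp (isWalk_add.mp hf).1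
  have hcycle : 0 ≤ walkWeight w (fun t => f (i + t)) d :=
    hcyc _ d hd hloop hrep ⟨f, i, hf0, hprefix, rfl⟩
  have hshort := ih (i + m) (by omega) (eraseSegment f i d)
    ((eraseSegment_of_le hrep (Nat.zero_le i)).trans hf0) (isWalk_eraseSegment hrep hf)
  rw [walkWeight_eraseSegment hrep] at hshort
  rw [walkWeight_add, walkWeight_add]
  linarith

end Walks

/-- in a finite weighted directed graph with weights bounded below by `-W`,
if every cycle reachable from `u` has nonnegative total weight, then every finite walk
starting at `u` has total weight at least `-2·|V'|·W`. -/
theorem statement12 {V' : Type*} [Fintype V']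
    (E' : Set (V' × V')) (w' : V' × V' → ℤ) (W : ℕ)
    (hw : ∀ e ∈ E', -(W : ℤ) ≤ w' e) (u : V')
    (hcyc : ∀ (f : ℕ → V') (k : ℕ), 1 ≤ k →
      (∀ i < k, (f i, f (i + 1)) ∈ E') → f k = f 0 →
      (∃ (g : ℕ → V') (m : ℕ), g 0 = u ∧ (∀ i < m, (g i, g (i + 1)) ∈ E') ∧ g m = f 0) →
      0 ≤ ∑ i ∈ Finset.range k, w' (f i, f (i + 1))) :
    ∀ (f : ℕ → V') (k : ℕ), f 0 = u → (∀ i < k, (f i, f (i + 1)) ∈ E') →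
      -((2 * Fintype.card V' * W : ℕ) : ℤ) ≤ ∑ i ∈ Finset.range k, w' (f i, f (i + 1)) := by
  intro f k hf0 hf
  have hbound := neg_card_mul_le_walkWeight hw hcyc k f hf0 hf
  have hle : (Fintype.card V' * W : ℤ) ≤ ((2 * Fintype.card V' * W : ℕ) : ℤ) := by
    push_cast
    nlinarith [(by positivity : (0 : ℤ) ≤ Fintype.card V' * W)]
  exact (neg_le_neg hle).trans hbound
end
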